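/- arXiv:1704.02894 — 9 statements merged into one kernel-verified Lean document; each statement's English description precedes it below -/
import Mathlib

section
/- For every fixed λ ∈ ℝ, the function π ↦ V(π,λ) is nonincreasing and convex on [0,1]; moreover π ↦ V0(π,λ) is nonincreasing and convex on [0,1], and π ↦ V1(π,λ) is affine (linear) in π with slope ρ0 − ρ1. -/
/-!
The discounted value is the fixed point of the Bellman operator
`T W = max (λ + β W((1-p)·)) (ρ₁ + (ρ₀ - ρ₁)· + β W 1)`, which is a `β`-contraction in the sup
norm on `[0,1]`. Both branches of `T` preserve "nonincreasing and convex on `[0,1]`": the first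
precomposes with the contraction `π ↦ (1-p)π`, the second is affine with slope `ρ₀ - ρ₁ ≤ 0`, and
a maximum of such functions is again such a function. Hence every value iterate `Tⁿ 0` has both
properties, and both survive the pointwise limit `Tⁿ 0 → V`.
-/

open Set Filter Topology

section Limits

variable {ι α E β 𝕜 : Type*} {l : Filter ι} [l.NeBot]

theorem AntitoneOn.of_tendsto [Preorder α] [TopologicalSpace β] [Preorder β]
    [OrderClosedTopology β] {f : ι → α → β} {g : α → β} {s : Set α}
    (hf : ∀ᶠ n in l, AntitoneOn (f n) s) (hg : ∀ x ∈ s, Tendsto (f · x) l (𝓝 (g x))) :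
    AntitoneOn g s := fun x hx y hy hxy =>
  le_of_tendsto_of_tendsto (hg y hy) (hg x hx) (hf.mono fun _ hn => hn hx hy hxy)

theorem ConvexOn.of_tendsto [Semiring 𝕜] [PartialOrder 𝕜] [AddCommMonoid E] [SMul 𝕜 E]
    [AddCommMonoid β] [PartialOrder β] [SMul 𝕜 β] [TopologicalSpace β] [OrderClosedTopology β]
    [ContinuousConstSMul 𝕜 β] [ContinuousAdd β] {f : ι → E → β} {g : E → β} {s : Set E}
    (hf : ∀ᶠ n in l, ConvexOn 𝕜 s (f n)) (hg : ∀ x ∈ s, Tendsto (f · x) l (𝓝 (g x))) :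
    ConvexOn 𝕜 s g := by
  obtain ⟨_, hs, -⟩ := hf.exists
  refine ⟨hs, fun x hx y hy a b ha hb hab => ?_⟩
  exact le_of_tendsto_of_tendsto (hg _ (hs hx hy ha hb hab))
    (((hg x hx).const_smul a).add ((hg y hy).const_smul b))
    (hf.mono fun _ hn => hn.2 hx hy ha hb hab)

end Limits

noncomputable section

/-- The paper's `V0(·, λ)` and `V1(·, λ)`, with `W` in place of `V(·, λ)`. -/
def notPlayValue (p β lam : ℝ) (W : ℝ → ℝ) (π : ℝ) : ℝ :=
  lam + β * W ((1 - p) * π)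

def playValue (ρ0 ρ1 β : ℝ) (W : ℝ → ℝ) (π : ℝ) : ℝ :=
  π * ρ0 + (1 - π) * ρ1 + β * W 1

def bellman (p ρ0 ρ1 β lam : ℝ) (W : ℝ → ℝ) (π : ℝ) : ℝ :=
  max (notPlayValue p β lam W π) (playValue ρ0 ρ1 β W π)

variable {p ρ0 ρ1 β lam : ℝ} {W : ℝ → ℝ}

theorem one_sub_mul_mem_Icc (hp0 : 0 ≤ p) (hp1 : p ≤ 1) {π : ℝ} (hπ : π ∈ Icc (0 : ℝ) 1) :
    (1 - p) * π ∈ Icc (0 : ℝ) 1 :=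
  unitInterval.mul_mem ⟨by linarith, by linarith⟩ hπ

theorem notPlayValue_antitoneOn (hp0 : 0 ≤ p) (hp1 : p ≤ 1) (hβ : 0 ≤ β)
    (hW : AntitoneOn W (Icc 0 1)) : AntitoneOn (notPlayValue p β lam W) (Icc 0 1) :=
  fun x hx y hy hxy => by
    unfold notPlayValue
    gcongr
    exact hW (one_sub_mul_mem_Icc hp0 hp1 hx) (one_sub_mul_mem_Icc hp0 hp1 hy)
      (mul_le_mul_of_nonneg_left hxy (by linarith))

theorem notPlayValue_convexOn (hp0 : 0 ≤ p) (hp1 : p ≤ 1) (hβ : 0 ≤ β)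
    (hW : ConvexOn ℝ (Icc 0 1) W) : ConvexOn ℝ (Icc 0 1) (notPlayValue p β lam W) :=
  (convexOn_const lam (convex_Icc 0 1)).add <|
    ((hW.comp_linearMap (LinearMap.mulLeft ℝ (1 - p))).subset
      (fun _ => one_sub_mul_mem_Icc hp0 hp1) (convex_Icc 0 1)).smul hβ

theorem playValue_eq (ρ0 ρ1 β : ℝ) (W : ℝ → ℝ) :
    playValue ρ0 ρ1 β W = fun π => (ρ0 - ρ1) * π + (ρ1 + β * W 1) := by
  funext π
  unfold playValue
  ring

theorem playValue_antitoneOn (hρ : ρ0 ≤ ρ1) : AntitoneOn (playValue ρ0 ρ1 β W) (Icc 0 1) := by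
  rw [playValue_eq]
  exact fun x _ y _ hxy => add_le_add_left (mul_le_mul_of_nonpos_left hxy (by linarith)) _

theorem playValue_convexOn : ConvexOn ℝ (Icc 0 1) (playValue ρ0 ρ1 β W) := by
  rw [playValue_eq]
  exact ((LinearMap.mulLeft ℝ (ρ0 - ρ1)).convexOn (convex_Icc 0 1)).add_const _

theorem bellman_antitoneOn_convexOn (hp0 : 0 ≤ p) (hp1 : p ≤ 1) (hρ : ρ0 ≤ ρ1) (hβ : 0 ≤ β)
    (hW : AntitoneOn W (Icc 0 1)) (hWc : ConvexOn ℝ (Icc 0 1) W) :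
    AntitoneOn (bellman p ρ0 ρ1 β lam W) (Icc 0 1) ∧
      ConvexOn ℝ (Icc 0 1) (bellman p ρ0 ρ1 β lam W) :=
  ⟨(notPlayValue_antitoneOn hp0 hp1 hβ hW).sup (playValue_antitoneOn hρ),
    (notPlayValue_convexOn hp0 hp1 hβ hWc).sup playValue_convexOn⟩

theorem bellman_iterate_antitoneOn_convexOn (hp0 : 0 ≤ p) (hp1 : p ≤ 1) (hρ : ρ0 ≤ ρ1)
    (hβ : 0 ≤ β) (n : ℕ) :
    AntitoneOn ((bellman p ρ0 ρ1 β lam)^[n] 0) (Icc 0 1) ∧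
      ConvexOn ℝ (Icc 0 1) ((bellman p ρ0 ρ1 β lam)^[n] 0) := by
  induction n with
  | zero => exact ⟨antitoneOn_const, convexOn_const 0 (convex_Icc 0 1)⟩
  | succ n ih =>
    rw [Function.iterate_succ_apply']
    exact bellman_antitoneOn_convexOn hp0 hp1 hρ hβ ih.1 ih.2

theorem abs_bellman_sub_le (hp0 : 0 ≤ p) (hp1 : p ≤ 1) (hβ : 0 ≤ β) {W' : ℝ → ℝ} {ε : ℝ}
    (h : ∀ π ∈ Icc (0 : ℝ) 1, |W π - W' π| ≤ ε) {π : ℝ} (hπ : π ∈ Icc (0 : ℝ) 1) :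
    |bellman p ρ0 ρ1 β lam W π - bellman p ρ0 ρ1 β lam W' π| ≤ β * ε := by
  refine (abs_max_sub_max_le_max _ _ _ _).trans (max_le ?_ ?_)
  · have hdiff : notPlayValue p β lam W π - notPlayValue p β lam W' π =
        β * (W ((1 - p) * π) - W' ((1 - p) * π)) := by
      unfold notPlayValue
      ring
    rw [hdiff, abs_mul, abs_of_nonneg hβ]
    exact mul_le_mul_of_nonneg_left (h _ (one_sub_mul_mem_Icc hp0 hp1 hπ)) hβ
  · have hdiff : playValue ρ0 ρ1 β W π - playValue ρ0 ρ1 β W' π = β * (W 1 - W' 1) := by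
      unfold playValue
      ring
    rw [hdiff, abs_mul, abs_of_nonneg hβ]
    exact mul_le_mul_of_nonneg_left (h 1 (right_mem_Icc.2 zero_le_one)) hβ

theorem abs_sub_bellman_iterate_le (hp0 : 0 ≤ p) (hp1 : p ≤ 1) (hβ : 0 ≤ β) {C : ℝ}
    (hfix : ∀ π ∈ Icc (0 : ℝ) 1, W π = bellman p ρ0 ρ1 β lam W π)
    (hC : ∀ π ∈ Icc (0 : ℝ) 1, |W π| ≤ C) (n : ℕ) :
    ∀ π ∈ Icc (0 : ℝ) 1, |W π - (bellman p ρ0 ρ1 β lam)^[n] 0 π| ≤ β ^ n * C := by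
  induction n with
  | zero => simpa using hC
  | succ n ih =>
    intro π hπ
    rw [Function.iterate_succ_apply', hfix π hπ, pow_succ', mul_assoc]
    exact abs_bellman_sub_le hp0 hp1 hβ ih hπ

theorem tendsto_bellman_iterate (hp0 : 0 ≤ p) (hp1 : p ≤ 1) (hβ0 : 0 ≤ β) (hβ1 : β < 1)
    {C : ℝ} (hfix : ∀ π ∈ Icc (0 : ℝ) 1, W π = bellman p ρ0 ρ1 β lam W π)
    (hC : ∀ π ∈ Icc (0 : ℝ) 1, |W π| ≤ C) :
    ∀ π ∈ Icc (0 : ℝ) 1, Tendsto (fun n => (bellman p ρ0 ρ1 β lam)^[n] 0 π) atTop (𝓝 (W π)) := by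
  intro π hπ
  have hgeom : Tendsto (fun n : ℕ => β ^ n * C) atTop (𝓝 0) := by
    simpa using (tendsto_pow_atTop_nhds_zero_of_lt_one hβ0 hβ1).mul_const C
  rw [tendsto_iff_dist_tendsto_zero]
  refine squeeze_zero (fun _ => dist_nonneg) (fun n => ?_) hgeom
  rw [Real.dist_eq, abs_sub_comm]
  exact abs_sub_bellman_iterate_le hp0 hp1 hβ0 hfix hC n π hπ

end

theorem stmt_1_general (p ρ0 ρ1 β : ℝ)
    (hp0 : 0 < p) (hp1 : p < 1) (hr01 : ρ0 < ρ1)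
    (hb0 : 0 < β) (hb1 : β < 1)
    (V : ℝ → ℝ → ℝ)
    (hVbd : ∀ lam : ℝ, ∃ C : ℝ, ∀ π ∈ Set.Icc (0:ℝ) 1, |V π lam| ≤ C)
    (hVeq : ∀ lam : ℝ, ∀ π ∈ Set.Icc (0:ℝ) 1,
      V π lam = max (lam + β * V ((1 - p) * π) lam)
        (π * ρ0 + (1 - π) * ρ1 + β * V 1 lam)) :
    ∀ lam : ℝ,
      AntitoneOn (fun π => V π lam) (Set.Icc (0:ℝ) 1) ∧
      ConvexOn ℝ (Set.Icc (0:ℝ) 1) (fun π => V π lam) ∧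
      AntitoneOn (fun π => lam + β * V ((1 - p) * π) lam) (Set.Icc (0:ℝ) 1) ∧
      ConvexOn ℝ (Set.Icc (0:ℝ) 1) (fun π => lam + β * V ((1 - p) * π) lam) ∧
      (∃ c : ℝ, ∀ π ∈ Set.Icc (0:ℝ) 1,
        π * ρ0 + (1 - π) * ρ1 + β * V 1 lam = (ρ0 - ρ1) * π + c) := by
  intro lam
  obtain ⟨C, hC⟩ := hVbd lam
  have hlim := tendsto_bellman_iterate hp0.le hp1.le hb0.le hb1 (hVeq lam) hC
  have hiter := bellman_iterate_antitoneOn_convexOn (lam := lam) hp0.le hp1.le hr01.le hb0.le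
  have hanti : AntitoneOn (fun π => V π lam) (Icc 0 1) :=
    AntitoneOn.of_tendsto (.of_forall fun n => (hiter n).1) hlim
  have hconv : ConvexOn ℝ (Icc 0 1) (fun π => V π lam) :=
    ConvexOn.of_tendsto (.of_forall fun n => (hiter n).2) hlim
  exact ⟨hanti, hconv, notPlayValue_antitoneOn hp0.le hp1.le hb0.le hanti,
    notPlayValue_convexOn hp0.le hp1.le hb0.le hconv, ρ1 + β * V 1 lam, fun π _ => by ring⟩

theorem stmt_1 (p ρ0 ρ1 β : ℝ)
    (hp0 : 0 < p) (hp1 : p < 1) (hr0 : 0 < ρ0) (hr01 : ρ0 < ρ1) (hr1 : ρ1 < 1)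
    (hb0 : 0 < β) (hb1 : β < 1)
    (V : ℝ → ℝ → ℝ)
    (hVbd : ∀ lam : ℝ, ∃ C : ℝ, ∀ π ∈ Set.Icc (0:ℝ) 1, |V π lam| ≤ C)
    (hVeq : ∀ lam : ℝ, ∀ π ∈ Set.Icc (0:ℝ) 1,
      V π lam = max (lam + β * V ((1 - p) * π) lam)
        (π * ρ0 + (1 - π) * ρ1 + β * V 1 lam)) :
    ∀ lam : ℝ,
      AntitoneOn (fun π => V π lam) (Set.Icc (0:ℝ) 1) ∧
      ConvexOn ℝ (Set.Icc (0:ℝ) 1) (fun π => V π lam) ∧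
      AntitoneOn (fun π => lam + β * V ((1 - p) * π) lam) (Set.Icc (0:ℝ) 1) ∧
      ConvexOn ℝ (Set.Icc (0:ℝ) 1) (fun π => lam + β * V ((1 - p) * π) lam) ∧
      (∃ c : ℝ, ∀ π ∈ Set.Icc (0:ℝ) 1,
        π * ρ0 + (1 - π) * ρ1 + β * V 1 lam = (ρ0 - ρ1) * π + c) :=
  stmt_1_general p ρ0 ρ1 β hp0 hp1 hr01 hb0 hb1 V hVbd hVeq
end

section
/- For every fixed π ∈ [0,1], the functions λ ↦ V(π,λ), λ ↦ V0(π,λ) and λ ↦ V1(π,λ) are nondecreasing and convex on ℝ. -/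
/-! For λ ≤ a λ₁ + b λ₂ (a, b ≥ 0, a + b = 1) let `f π := V(π,λ) - (a V(π,λ₁) + b V(π,λ₂))`.
Both branches of the Bellman equation are affine in λ plus `β` times a value of `V`, and a
maximum of convex combinations is at most the convex combination of maxima; hence
`f ≤ β · sup f`. Since `β < 1` the bounded function `f` is nonpositive. This single inequality
gives both monotonicity (a = 1, b = 0) and convexity (λ = a λ₁ + b λ₂) of `V(π, ·)`, and
those of `V0(π, ·)` and `V1(π, ·)` follow since they add an affine function to `β V(π', ·)`. -/

open Set

lemma nonpos_of_le_mul_of_bound {α : Type*} {s : Set α} {f : α → ℝ} {β : ℝ} (hβ : β < 1)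
    (hbdd : BddAbove (f '' s))
    (h : ∀ M, (∀ y ∈ s, f y ≤ M) → ∀ x ∈ s, f x ≤ β * M) :
    ∀ x ∈ s, f x ≤ 0 := by
  intro x hx
  have hle : ∀ y ∈ s, f y ≤ sSup (f '' s) := fun y hy => le_csSup hbdd (mem_image_of_mem f hy)
  have hsup : sSup (f '' s) ≤ β * sSup (f '' s) :=
    csSup_le ⟨f x, mem_image_of_mem f hx⟩ (forall_mem_image.2 (h _ hle))
  nlinarith [hle x hx]

lemma max_add_mul_le_mul_max_add_mul {a b x₁ x₂ y₁ y₂ : ℝ} (ha : 0 ≤ a) (hb : 0 ≤ b) :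
    max (a * x₁ + b * x₂) (a * y₁ + b * y₂) ≤ a * max x₁ y₁ + b * max x₂ y₂ :=
  max_le (by gcongr <;> exact le_max_left _ _) (by gcongr <;> exact le_max_right _ _)

section Bellman

variable {α : Type*} {s : Set α} {g h : α → α} {r : α → ℝ} {β : ℝ} {V : α → ℝ → ℝ}

theorem bellman_le_convex_combination (hβ0 : 0 ≤ β) (hβ1 : β < 1)
    (hg : MapsTo g s s) (hh : MapsTo h s s)
    (hbd : ∀ l, ∃ C, ∀ x ∈ s, |V x l| ≤ C)
    (hV : ∀ l, ∀ x ∈ s, V x l = max (l + β * V (g x) l) (r x + β * V (h x) l))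
    {a b l₁ l₂ l : ℝ} (ha : 0 ≤ a) (hb : 0 ≤ b) (hab : a + b = 1) (hl : l ≤ a * l₁ + b * l₂) :
    ∀ x ∈ s, V x l ≤ a * V x l₁ + b * V x l₂ := by
  suffices ∀ x ∈ s, V x l - (a * V x l₁ + b * V x l₂) ≤ 0 from
    fun x hx => sub_nonpos.1 (this x hx)
  refine nonpos_of_le_mul_of_bound hβ1 ?_ ?_
  · obtain ⟨C, hC⟩ := hbd l
    obtain ⟨C₁, hC₁⟩ := hbd l₁
    obtain ⟨C₂, hC₂⟩ := hbd l₂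
    refine ⟨C + a * C₁ + b * C₂, forall_mem_image.2 fun x hx => ?_⟩
    have h₁ := mul_le_mul_of_nonneg_left (neg_le_of_abs_le (hC₁ x hx)) ha
    have h₂ := mul_le_mul_of_nonneg_left (neg_le_of_abs_le (hC₂ x hx)) hb
    linarith [le_of_abs_le (hC x hx)]
  · intro M hM x hx
    have hstep : ∀ y ∈ s, β * V y l ≤ a * (β * V y l₁) + b * (β * V y l₂) + β * M :=
      fun y hy => by nlinarith [mul_le_mul_of_nonneg_left (hM y hy) hβ0]
    have hr : r x = a * r x + b * r x := by rw [← add_mul, hab, one_mul]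
    have hmax : V x l ≤ max (a * (l₁ + β * V (g x) l₁) + b * (l₂ + β * V (g x) l₂))
        (a * (r x + β * V (h x) l₁) + b * (r x + β * V (h x) l₂)) + β * M := by
      rw [hV l x hx, ← max_add_add_right]
      exact max_le_max (by linarith [hstep _ (hg hx)]) (by linarith [hstep _ (hh hx)])
    rw [hV l₁ x hx, hV l₂ x hx]
    linarith [max_add_mul_le_mul_max_add_mul (x₁ := l₁ + β * V (g x) l₁)
      (x₂ := l₂ + β * V (g x) l₂) (y₁ := r x + β * V (h x) l₁) (y₂ := r x + β * V (h x) l₂)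
      ha hb]

variable (hβ0 : 0 ≤ β) (hβ1 : β < 1) (hg : MapsTo g s s) (hh : MapsTo h s s)
  (hbd : ∀ l, ∃ C, ∀ x ∈ s, |V x l| ≤ C)
  (hV : ∀ l, ∀ x ∈ s, V x l = max (l + β * V (g x) l) (r x + β * V (h x) l))
include hβ0 hβ1 hg hh hbd hV

theorem monotone_bellman : ∀ x ∈ s, Monotone (V x) := fun x hx l l' hll' => by
  simpa using bellman_le_convex_combination (l₁ := l') (l₂ := l') hβ0 hβ1 hg hh hbd hV
    zero_le_one le_rfl (add_zero 1) (by simpa using hll') x hx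

theorem convexOn_bellman : ∀ x ∈ s, ConvexOn ℝ univ (V x) := fun x hx =>
  ⟨convex_univ, fun _ _ _ _ _ _ ha hb hab =>
    bellman_le_convex_combination hβ0 hβ1 hg hh hbd hV ha hb hab le_rfl x hx⟩

end Bellman

theorem stmt_3_general (p ρ0 ρ1 β : ℝ)
    (hp0 : 0 < p) (hp1 : p < 1)
    (hb0 : 0 < β) (hb1 : β < 1)
    (V : ℝ → ℝ → ℝ)
    (hVbd : ∀ lam : ℝ, ∃ C : ℝ, ∀ π ∈ Set.Icc (0:ℝ) 1, |V π lam| ≤ C)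
    (hVeq : ∀ lam : ℝ, ∀ π ∈ Set.Icc (0:ℝ) 1,
      V π lam = max (lam + β * V ((1 - p) * π) lam)
        (π * ρ0 + (1 - π) * ρ1 + β * V 1 lam)) :
    ∀ π ∈ Set.Icc (0:ℝ) 1,
      Monotone (fun lam => V π lam) ∧
      ConvexOn ℝ Set.univ (fun lam => V π lam) ∧
      Monotone (fun lam => lam + β * V ((1 - p) * π) lam) ∧
      ConvexOn ℝ Set.univ (fun lam => lam + β * V ((1 - p) * π) lam) ∧
      Monotone (fun lam => π * ρ0 + (1 - π) * ρ1 + β * V 1 lam) ∧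
      ConvexOn ℝ Set.univ (fun lam => π * ρ0 + (1 - π) * ρ1 + β * V 1 lam) := by
  have hg : MapsTo (fun π : ℝ => (1 - p) * π) (Icc 0 1) (Icc 0 1) := fun π ⟨h0, h1⟩ =>
    ⟨by nlinarith, by nlinarith⟩
  have hh : MapsTo (fun _ : ℝ => (1 : ℝ)) (Icc 0 1) (Icc 0 1) := fun _ _ => right_mem_Icc.2 zero_le_one
  have hmono := monotone_bellman (r := fun π => π * ρ0 + (1 - π) * ρ1) hb0.le hb1 hg hh hVbd hVeq
  have hconv := convexOn_bellman (r := fun π => π * ρ0 + (1 - π) * ρ1) hb0.le hb1 hg hh hVbd hVeq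
  intro π hπ
  exact ⟨hmono π hπ, hconv π hπ,
    monotone_id.add ((hmono _ (hg hπ)).const_mul hb0.le),
    (convexOn_id convex_univ).add ((hconv _ (hg hπ)).smul hb0.le),
    monotone_const.add ((hmono _ (hh hπ)).const_mul hb0.le),
    (convexOn_const _ convex_univ).add ((hconv _ (hh hπ)).smul hb0.le)⟩

theorem stmt_3 (p ρ0 ρ1 β : ℝ)
    (hp0 : 0 < p) (hp1 : p < 1) (hr0 : 0 < ρ0) (hr01 : ρ0 < ρ1) (hr1 : ρ1 < 1)
    (hb0 : 0 < β) (hb1 : β < 1)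
    (V : ℝ → ℝ → ℝ)
    (hVbd : ∀ lam : ℝ, ∃ C : ℝ, ∀ π ∈ Set.Icc (0:ℝ) 1, |V π lam| ≤ C)
    (hVeq : ∀ lam : ℝ, ∀ π ∈ Set.Icc (0:ℝ) 1,
      V π lam = max (lam + β * V ((1 - p) * π) lam)
        (π * ρ0 + (1 - π) * ρ1 + β * V 1 lam)) :
    ∀ π ∈ Set.Icc (0:ℝ) 1,
      Monotone (fun lam => V π lam) ∧
      ConvexOn ℝ Set.univ (fun lam => V π lam) ∧
      Monotone (fun lam => lam + β * V ((1 - p) * π) lam) ∧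
      ConvexOn ℝ Set.univ (fun lam => lam + β * V ((1 - p) * π) lam) ∧
      Monotone (fun lam => π * ρ0 + (1 - π) * ρ1 + β * V 1 lam) ∧
      ConvexOn ℝ Set.univ (fun lam => π * ρ0 + (1 - π) * ρ1 + β * V 1 lam) :=
  stmt_3_general p ρ0 ρ1 β hp0 hp1 hb0 hb1 V hVbd hVeq
end

section
/- For every fixed λ ∈ ℝ and all π1, π2 ∈ [0,1], one has |V(π1,λ) − V(π2,λ)| ≤ (ρ1 − ρ0)·|π1 − π2|; that is, π ↦ V(π,λ) is Lipschitz on [0,1] with Lipschitz constant ρ1 − ρ0. -/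
/-!
Fix `λ`. The Bellman equation has the shape `f x = max (c + β f (g x)) (r x)`, where
`g π = (1 - p) π` does not increase distances and the play value `r` is `(ρ1 - ρ0)`-Lipschitz.
Since `max` is 1-Lipschitz, one application of the equation turns a bound
`|f x - f y| ≤ L |x - y| + ε` into the same bound with `β ε` in place of `ε`. Starting from
`ε = 2C` for a bound `C` on `|f|` and iterating, the error term `βⁿ 2C` tends to zero.
-/

open Set

theorem le_of_forall_le_add_pow_mul {a b c β : ℝ} (hβ0 : 0 ≤ β) (hβ1 : β < 1)
    (h : ∀ n : ℕ, a ≤ b + β ^ n * c) : a ≤ b := by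
  have hlim : Filter.Tendsto (fun n : ℕ => b + β ^ n * c) Filter.atTop (nhds (b + 0 * c)) :=
    ((tendsto_pow_atTop_nhds_zero_of_lt_one hβ0 hβ1).mul_const c).const_add b
  rw [zero_mul, add_zero] at hlim
  exact ge_of_tendsto' hlim h

section Bellman

variable {s : Set ℝ} {f g r : ℝ → ℝ} {c β L : ℝ}

theorem abs_sub_le_of_bellman_step (hβ0 : 0 ≤ β) (hβ1 : β ≤ 1) (hL : 0 ≤ L)
    (hf : ∀ x ∈ s, f x = max (c + β * f (g x)) (r x)) (hgs : MapsTo g s s)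
    (hg : ∀ x ∈ s, ∀ y ∈ s, |g x - g y| ≤ |x - y|)
    (hr : ∀ x ∈ s, ∀ y ∈ s, |r x - r y| ≤ L * |x - y|) {ε : ℝ}
    (hε : ∀ x ∈ s, ∀ y ∈ s, |f x - f y| ≤ L * |x - y| + ε) :
    ∀ x ∈ s, ∀ y ∈ s, |f x - f y| ≤ L * |x - y| + β * ε := by
  intro x hx y hy
  have hε0 : 0 ≤ ε := by simpa using hε x hx x hx
  have hdist : 0 ≤ L * |x - y| := mul_nonneg hL (abs_nonneg _)
  have hcontinue : |(c + β * f (g x)) - (c + β * f (g y))| ≤ L * |x - y| + β * ε :=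
    calc |(c + β * f (g x)) - (c + β * f (g y))| = β * |f (g x) - f (g y)| := by
          rw [add_sub_add_left_eq_sub, ← mul_sub, abs_mul, abs_of_nonneg hβ0]
      _ ≤ β * (L * |g x - g y| + ε) := by gcongr; exact hε _ (hgs hx) _ (hgs hy)
      _ ≤ β * (L * |x - y| + ε) := by
          gcongr β * (L * ?_ + ε)
          exact hg x hx y hy
      _ ≤ L * |x - y| + β * ε := by nlinarith
  rw [hf x hx, hf y hy]
  refine (abs_max_sub_max_le_max _ _ _ _).trans (max_le hcontinue ?_)
  nlinarith [hr x hx y hy]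

theorem abs_sub_le_of_bellman (hβ0 : 0 ≤ β) (hβ1 : β < 1) (hL : 0 ≤ L)
    (hf : ∀ x ∈ s, f x = max (c + β * f (g x)) (r x)) (hgs : MapsTo g s s)
    (hg : ∀ x ∈ s, ∀ y ∈ s, |g x - g y| ≤ |x - y|)
    (hr : ∀ x ∈ s, ∀ y ∈ s, |r x - r y| ≤ L * |x - y|)
    (hbdd : ∃ C, ∀ x ∈ s, |f x| ≤ C) :
    ∀ x ∈ s, ∀ y ∈ s, |f x - f y| ≤ L * |x - y| := by
  obtain ⟨C, hC⟩ := hbdd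
  have hiter : ∀ n : ℕ, ∀ x ∈ s, ∀ y ∈ s, |f x - f y| ≤ L * |x - y| + β ^ n * (2 * C) := by
    intro n
    induction n with
    | zero =>
      intro x hx y hy
      have := abs_sub (f x) (f y)
      nlinarith [hC x hx, hC y hy, abs_nonneg (x - y)]
    | succ n ih =>
      simpa only [pow_succ', mul_assoc] using
        abs_sub_le_of_bellman_step hβ0 hβ1.le hL hf hgs hg hr ih
  exact fun x hx y hy => le_of_forall_le_add_pow_mul hβ0 hβ1 fun n => hiter n x hx y hy

end Bellman

theorem stmt_6_general (p ρ0 ρ1 β : ℝ)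
    (hp0 : 0 < p) (hp1 : p < 1) (hr01 : ρ0 < ρ1)
    (hb0 : 0 < β) (hb1 : β < 1)
    (V : ℝ → ℝ → ℝ)
    (hVbd : ∀ lam : ℝ, ∃ C : ℝ, ∀ π ∈ Set.Icc (0:ℝ) 1, |V π lam| ≤ C)
    (hVeq : ∀ lam : ℝ, ∀ π ∈ Set.Icc (0:ℝ) 1,
      V π lam = max (lam + β * V ((1 - p) * π) lam)
        (π * ρ0 + (1 - π) * ρ1 + β * V 1 lam)) :
    ∀ lam : ℝ, ∀ π1 ∈ Set.Icc (0:ℝ) 1, ∀ π2 ∈ Set.Icc (0:ℝ) 1,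
      |V π1 lam - V π2 lam| ≤ (ρ1 - ρ0) * |π1 - π2| := by
  intro lam
  have hshrink : MapsTo (fun π => (1 - p) * π) (Icc 0 1) (Icc 0 1) := fun π hπ =>
    ⟨mul_nonneg (by linarith) hπ.1, by nlinarith [hπ.1, hπ.2]⟩
  have hshrink_dist : ∀ x ∈ Icc (0:ℝ) 1, ∀ y ∈ Icc (0:ℝ) 1,
      |(1 - p) * x - (1 - p) * y| ≤ |x - y| := fun x _ y _ => by
    rw [← mul_sub, abs_mul, abs_of_pos (by linarith)]
    nlinarith [abs_nonneg (x - y)]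
  have hplay : ∀ x ∈ Icc (0:ℝ) 1, ∀ y ∈ Icc (0:ℝ) 1,
      |(x * ρ0 + (1 - x) * ρ1 + β * V 1 lam) - (y * ρ0 + (1 - y) * ρ1 + β * V 1 lam)|
        ≤ (ρ1 - ρ0) * |x - y| := fun x _ y _ => by
    rw [show (x * ρ0 + (1 - x) * ρ1 + β * V 1 lam) - (y * ρ0 + (1 - y) * ρ1 + β * V 1 lam)
        = (ρ1 - ρ0) * (y - x) by ring, abs_mul, abs_of_pos (by linarith), abs_sub_comm]
  exact abs_sub_le_of_bellman hb0.le hb1 (by linarith) (hVeq lam) hshrink hshrink_dist hplay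
    (hVbd lam)

theorem stmt_6 (p ρ0 ρ1 β : ℝ)
    (hp0 : 0 < p) (hp1 : p < 1) (hr0 : 0 < ρ0) (hr01 : ρ0 < ρ1) (hr1 : ρ1 < 1)
    (hb0 : 0 < β) (hb1 : β < 1)
    (V : ℝ → ℝ → ℝ)
    (hVbd : ∀ lam : ℝ, ∃ C : ℝ, ∀ π ∈ Set.Icc (0:ℝ) 1, |V π lam| ≤ C)
    (hVeq : ∀ lam : ℝ, ∀ π ∈ Set.Icc (0:ℝ) 1,
      V π lam = max (lam + β * V ((1 - p) * π) lam)
        (π * ρ0 + (1 - π) * ρ1 + β * V 1 lam)) :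
    ∀ lam : ℝ, ∀ π1 ∈ Set.Icc (0:ℝ) 1, ∀ π2 ∈ Set.Icc (0:ℝ) 1,
      |V π1 lam - V π2 lam| ≤ (ρ1 - ρ0) * |π1 - π2| :=
  stmt_6_general p ρ0 ρ1 β hp0 hp1 hr01 hb0 hb1 V hVbd hVeq
end

section
/- For every fixed λ ∈ ℝ, the function π ↦ V1(π,λ) − V0(π,λ) is strictly decreasing on [0,1]; i.e., for all 0 ≤ π1 < π2 ≤ 1, V1(π2,λ) − V0(π2,λ) < V1(π1,λ) − V0(π1,λ). -/
/-!
Write `c = ρ1 - ρ0` and `q = 1 - p`. Since the "play" values at `π1 ≤ π2` differ by exactly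
`(π2 - π1) c` while the "not play" values differ by `β (V(q π1) - V(q π2))`, it suffices that
`V a - V b ≤ (b - a) c` for `0 ≤ a ≤ b ≤ 1`, because `β q < 1`. The excess
`g(a, b) = V a - V b - (b - a) c` satisfies `g(a, b) ≤ max (β g(q a, q b)) 0` by the Bellman
equation, and `g` is bounded, so iterating gives `g ≤ β ^ n · const → 0`.
-/

open Filter Topology Set

theorem nonpos_of_le_max_mul_comp {α : Type*} {s : Set α} {T : α → α} {g : α → ℝ} {β M : ℝ}
    (hT : MapsTo T s s) (hβ0 : 0 ≤ β) (hβ1 : β < 1) (hM : ∀ x ∈ s, g x ≤ M)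
    (hg : ∀ x ∈ s, g x ≤ max (β * g (T x)) 0) : ∀ x ∈ s, g x ≤ 0 := by
  have hpow : ∀ n : ℕ, ∀ x ∈ s, g x ≤ β ^ n * max M 0 := by
    intro n
    induction n with
    | zero => intro x hx; simpa using (hM x hx).trans (le_max_left M 0)
    | succ n ih =>
      intro x hx
      calc g x ≤ max (β * g (T x)) 0 := hg x hx
        _ ≤ max (β * (β ^ n * max M 0)) 0 := by gcongr; exact ih _ (hT hx)
        _ = β ^ (n + 1) * max M 0 := by rw [max_eq_left (by positivity)]; ring
  intro x hx
  have hlim : Tendsto (fun n : ℕ => β ^ n * max M 0) atTop (𝓝 0) := by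
    simpa using (tendsto_pow_atTop_nhds_zero_of_lt_one hβ0 hβ1).mul_const (max M 0)
  exact ge_of_tendsto' hlim fun n => hpow n x hx

section Bellman

variable {p ρ0 ρ1 β lam : ℝ} {v : ℝ → ℝ}

theorem bellman_sub_le_max
    (hv : ∀ π ∈ Icc (0 : ℝ) 1,
      v π = max (lam + β * v ((1 - p) * π)) (π * ρ0 + (1 - π) * ρ1 + β * v 1))
    {a b : ℝ} (ha : a ∈ Icc (0 : ℝ) 1) (hb : b ∈ Icc (0 : ℝ) 1) :
    v a - v b ≤ max (β * (v ((1 - p) * a) - v ((1 - p) * b))) ((b - a) * (ρ1 - ρ0)) := by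
  rw [hv a ha, hv b hb]
  refine (max_sub_max_le_max _ _ _ _).trans (le_of_eq ?_)
  congr 1 <;> ring

theorem bellman_sub_le_mul_sub
    (hp0 : 0 ≤ p) (hp1 : p ≤ 1) (hρ : ρ0 ≤ ρ1) (hβ0 : 0 ≤ β) (hβ1 : β < 1)
    (hbd : ∃ C, ∀ π ∈ Icc (0 : ℝ) 1, |v π| ≤ C)
    (hv : ∀ π ∈ Icc (0 : ℝ) 1,
      v π = max (lam + β * v ((1 - p) * π)) (π * ρ0 + (1 - π) * ρ1 + β * v 1))
    {a b : ℝ} (ha : 0 ≤ a) (hab : a ≤ b) (hb : b ≤ 1) :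
    v a - v b ≤ (b - a) * (ρ1 - ρ0) := by
  obtain ⟨C, hC⟩ := hbd
  set s : Set (ℝ × ℝ) := {x | 0 ≤ x.1 ∧ x.1 ≤ x.2 ∧ x.2 ≤ 1}
  have hq0 : 0 ≤ 1 - p := by linarith
  have hq1 : 1 - p ≤ 1 := by linarith
  have hIcc : ∀ x ∈ s, x.1 ∈ Icc (0 : ℝ) 1 ∧ x.2 ∈ Icc (0 : ℝ) 1 := fun x ⟨h0, h12, h2⟩ =>
    ⟨⟨h0, h12.trans h2⟩, ⟨h0.trans h12, h2⟩⟩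
  have hT : MapsTo (fun x : ℝ × ℝ => ((1 - p) * x.1, (1 - p) * x.2)) s s :=
    fun x ⟨h0, h12, h2⟩ => ⟨mul_nonneg hq0 h0, mul_le_mul_of_nonneg_left h12 hq0, by nlinarith⟩
  suffices h : ∀ x ∈ s, v x.1 - v x.2 - (x.2 - x.1) * (ρ1 - ρ0) ≤ 0 by
    linarith [h (a, b) ⟨ha, hab, hb⟩]
  refine nonpos_of_le_max_mul_comp hT hβ0 hβ1 (M := 2 * C) ?_ ?_
  · intro x hx
    have h1 := abs_le.1 (hC _ (hIcc x hx).1)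
    have h2 := abs_le.1 (hC _ (hIcc x hx).2)
    nlinarith [mul_nonneg (sub_nonneg.2 hx.2.1) (sub_nonneg.2 hρ)]
  · intro x hx
    have hstep := bellman_sub_le_max hv (hIcc x hx).1 (hIcc x hx).2
    -- the discount `β (1 - p) ≤ 1` absorbs the linear term of the continuation
    have hdisc : β * ((1 - p) * (x.2 - x.1) * (ρ1 - ρ0)) ≤ (x.2 - x.1) * (ρ1 - ρ0) := by
      have hd : 0 ≤ (x.2 - x.1) * (ρ1 - ρ0) := mul_nonneg (by linarith [hx.2.1]) (by linarith)
      nlinarith [mul_le_one₀ hβ1.le hq0 hq1]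
    rcases le_max_iff.1 hstep with h | h
    · exact le_max_of_le_left (by dsimp only; linarith)
    · exact le_max_of_le_right (by linarith)

end Bellman

theorem stmt_8_general (p ρ0 ρ1 β : ℝ)
    (hp0 : 0 < p) (hp1 : p < 1) (hr01 : ρ0 < ρ1)
    (hb0 : 0 < β) (hb1 : β < 1)
    (V : ℝ → ℝ → ℝ)
    (hVbd : ∀ lam : ℝ, ∃ C : ℝ, ∀ π ∈ Set.Icc (0:ℝ) 1, |V π lam| ≤ C)
    (hVeq : ∀ lam : ℝ, ∀ π ∈ Set.Icc (0:ℝ) 1,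
      V π lam = max (lam + β * V ((1 - p) * π) lam)
        (π * ρ0 + (1 - π) * ρ1 + β * V 1 lam)) :
    ∀ lam : ℝ, ∀ π1 π2 : ℝ, 0 ≤ π1 → π1 < π2 → π2 ≤ 1 →
      (π2 * ρ0 + (1 - π2) * ρ1 + β * V 1 lam) - (lam + β * V ((1 - p) * π2) lam) <
      (π1 * ρ0 + (1 - π1) * ρ1 + β * V 1 lam) - (lam + β * V ((1 - p) * π1) lam) := by
  intro lam π1 π2 h0 h12 h2
  have hlip := bellman_sub_le_mul_sub hp0.le hp1.le hr01.le hb0.le hb1 (hVbd lam) (hVeq lam)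
    (a := (1 - p) * π1) (b := (1 - p) * π2) (by nlinarith) (by nlinarith) (by nlinarith)
  have hgap : 0 < (π2 - π1) * (ρ1 - ρ0) := mul_pos (sub_pos.2 h12) (sub_pos.2 hr01)
  have hβq : β * (1 - p) < 1 := by nlinarith
  nlinarith [mul_le_mul_of_nonneg_left hlip hb0.le]

theorem stmt_8 (p ρ0 ρ1 β : ℝ)
    (hp0 : 0 < p) (hp1 : p < 1) (hr0 : 0 < ρ0) (hr01 : ρ0 < ρ1) (hr1 : ρ1 < 1)
    (hb0 : 0 < β) (hb1 : β < 1)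
    (V : ℝ → ℝ → ℝ)
    (hVbd : ∀ lam : ℝ, ∃ C : ℝ, ∀ π ∈ Set.Icc (0:ℝ) 1, |V π lam| ≤ C)
    (hVeq : ∀ lam : ℝ, ∀ π ∈ Set.Icc (0:ℝ) 1,
      V π lam = max (lam + β * V ((1 - p) * π) lam)
        (π * ρ0 + (1 - π) * ρ1 + β * V 1 lam)) :
    ∀ lam : ℝ, ∀ π1 π2 : ℝ, 0 ≤ π1 → π1 < π2 → π2 ≤ 1 →
      (π2 * ρ0 + (1 - π2) * ρ1 + β * V 1 lam) - (lam + β * V ((1 - p) * π2) lam) <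
      (π1 * ρ0 + (1 - π1) * ρ1 + β * V 1 lam) - (lam + β * V ((1 - p) * π1) lam) :=
  stmt_8_general p ρ0 ρ1 β hp0 hp1 hr01 hb0 hb1 V hVbd hVeq
end

section
/- Let λ_L := ρ1 + (1−β)·(ρ0 − ρ1) and λ_H := ρ1, and let λ ∈ [λ_L, λ_H]. Then the optimal policy is of threshold type with a single threshold: there exists a unique π_T ∈ [0,1] such that V1(π_T,λ) = V0(π_T,λ), and for all π ∈ [0,1], V(π,λ) = V1(π,λ) if π ≤ π_T, while V(π,λ) = V0(π,λ) if π ≥ π_T. -/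
/-!
For `λ ∈ [λ_L, λ_H]` the value function is explicit: it is the better of "play now, then play
forever once the belief is back at `0`", worth `ρ1/(1-β) - π(ρ1-ρ0)`, and "never play", worth
`λ/(1-β)`. This candidate satisfies the Bellman equation, and the Bellman operator is a
`β`-contraction in the sup norm, so it is the bounded solution `V`. The two affine pieces cross
exactly once in `[0,1]`, at `π_T = (ρ1 - λ)/((1-β)(ρ1-ρ0))`.
-/

open Set

theorem le_zero_of_forall_exists_le_mul {α : Type*} {s : Set α} {d : α → ℝ} {β : ℝ}
    (hβ0 : 0 ≤ β) (hβ1 : β < 1) (hd : BddAbove (d '' s))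
    (h : ∀ x ∈ s, ∃ y ∈ s, d x ≤ β * d y) : ∀ x ∈ s, d x ≤ 0 := by
  intro x hx
  have hle : ∀ y ∈ s, d y ≤ sSup (d '' s) := fun y hy => le_csSup hd (mem_image_of_mem d hy)
  have hsup : sSup (d '' s) ≤ β * sSup (d '' s) := by
    refine csSup_le ⟨d x, mem_image_of_mem d hx⟩ ?_
    rintro _ ⟨y, hy, rfl⟩
    obtain ⟨z, hz, hyz⟩ := h y hy
    exact hyz.trans (mul_le_mul_of_nonneg_left (hle z hz) hβ0)
  nlinarith [hle x hx]

theorem eqOn_of_bellman {α : Type*} {s : Set α} {a b : α → ℝ} {f g : α → α} {β : ℝ}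
    {V W : α → ℝ} (hβ0 : 0 ≤ β) (hβ1 : β < 1) (hf : MapsTo f s s) (hg : MapsTo g s s)
    (hVbd : ∃ C, ∀ x ∈ s, |V x| ≤ C) (hWbd : ∃ C, ∀ x ∈ s, |W x| ≤ C)
    (hV : ∀ x ∈ s, V x = max (a x + β * V (f x)) (b x + β * V (g x)))
    (hW : ∀ x ∈ s, W x = max (a x + β * W (f x)) (b x + β * W (g x))) :
    EqOn V W s := by
  obtain ⟨CV, hCV⟩ := hVbd
  obtain ⟨CW, hCW⟩ := hWbd
  have hbdd : BddAbove ((fun x => |V x - W x|) '' s) := by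
    refine ⟨CV + CW, ?_⟩
    rintro _ ⟨x, hx, rfl⟩
    exact (abs_sub _ _).trans (add_le_add (hCV x hx) (hCW x hx))
  have hstep : ∀ x ∈ s, ∃ y ∈ s, |V x - W x| ≤ β * |V y - W y| := by
    intro x hx
    have hmax := abs_max_sub_max_le_max (a x + β * V (f x)) (b x + β * V (g x))
      (a x + β * W (f x)) (b x + β * W (g x))
    rw [← hV x hx, ← hW x hx, add_sub_add_left_eq_sub, add_sub_add_left_eq_sub, ← mul_sub,
      ← mul_sub, abs_mul, abs_mul, abs_of_nonneg hβ0] at hmax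
    rcases max_choice (β * |V (f x) - W (f x)|) (β * |V (g x) - W (g x)|) with h | h
    · exact ⟨f x, hf hx, h ▸ hmax⟩
    · exact ⟨g x, hg hx, h ▸ hmax⟩
  intro x hx
  have := le_zero_of_forall_exists_le_mul hβ0 hβ1 hbdd hstep x hx
  exact sub_eq_zero.mp (abs_nonpos_iff.mp this)

namespace TypeB

variable (ρ0 ρ1 β lam : ℝ)

noncomputable def threshold : ℝ := (ρ1 - lam) / ((1 - β) * (ρ1 - ρ0))

noncomputable def value (π : ℝ) : ℝ := max (ρ1 / (1 - β) - π * (ρ1 - ρ0)) (lam / (1 - β))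

variable {ρ0 ρ1 β lam}

theorem continuous_value : Continuous (value ρ0 ρ1 β lam) := by
  unfold value
  fun_prop

theorem div_le_value (π : ℝ) : lam / (1 - β) ≤ value ρ0 ρ1 β lam π := le_max_right _ _

theorem value_antitone (hρ : ρ0 ≤ ρ1) : Antitone (value ρ0 ρ1 β lam) := by
  intro x y hxy
  unfold value
  gcongr

theorem value_zero (hβ : β < 1) (hlam : lam ≤ ρ1) : value ρ0 ρ1 β lam 0 = ρ1 / (1 - β) := by
  unfold value
  rw [zero_mul, sub_zero, max_eq_left]
  gcongr

theorem reward_add_mul_div_eq (hβ : β < 1) (π : ℝ) :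
    π * ρ0 + (1 - π) * ρ1 + β * (ρ1 / (1 - β)) = ρ1 / (1 - β) - π * (ρ1 - ρ0) := by
  have : 1 - β ≠ 0 := by linarith
  field_simp
  ring

theorem lam_add_mul_eq (hβ : β < 1) (v : ℝ) :
    lam + β * v = lam / (1 - β) + β * (v - lam / (1 - β)) := by
  have : 1 - β ≠ 0 := by linarith
  field_simp
  ring

theorem div_le_lam_add_mul_value (hβ0 : 0 ≤ β) (hβ1 : β < 1) (y : ℝ) :
    lam / (1 - β) ≤ lam + β * value ρ0 ρ1 β lam y := by
  have hy : lam / (1 - β) ≤ value ρ0 ρ1 β lam y := div_le_value y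
  rw [lam_add_mul_eq hβ1]
  nlinarith

theorem lam_add_mul_value_le (hβ : β < 1) (y : ℝ) :
    lam + β * value ρ0 ρ1 β lam y ≤ value ρ0 ρ1 β lam y := by
  have hy : lam / (1 - β) ≤ value ρ0 ρ1 β lam y := div_le_value y
  rw [lam_add_mul_eq hβ]
  nlinarith

theorem lam_add_mul_value_lt (hβ : β < 1) {y : ℝ} (hy : lam / (1 - β) < value ρ0 ρ1 β lam y) :
    lam + β * value ρ0 ρ1 β lam y < value ρ0 ρ1 β lam y := by
  rw [lam_add_mul_eq hβ]
  nlinarith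

theorem value_bellman (hβ0 : 0 ≤ β) (hβ1 : β < 1) (hρ : ρ0 ≤ ρ1) (hlam : lam ≤ ρ1) {π y : ℝ}
    (hπy : π ≤ y) :
    value ρ0 ρ1 β lam π = max (lam + β * value ρ0 ρ1 β lam y)
      (π * ρ0 + (1 - π) * ρ1 + β * value ρ0 ρ1 β lam 0) := by
  rw [value_zero hβ1 hlam, reward_add_mul_div_eq hβ1]
  -- `λ/(1-β) ≤ λ + β value y ≤ value π`: not playing can only tie with `λ/(1-β)`
  have hlow : lam / (1 - β) ≤ lam + β * value ρ0 ρ1 β lam y := div_le_lam_add_mul_value hβ0 hβ1 y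
  have hup : lam + β * value ρ0 ρ1 β lam y ≤ value ρ0 ρ1 β lam π :=
    (lam_add_mul_value_le hβ1 y).trans (value_antitone hρ hπy)
  exact le_antisymm (max_le (le_max_right _ _) (hlow.trans (le_max_left _ _)))
    (max_le hup (le_max_left _ _))

theorem threshold_mem_Icc (hβ : β < 1) (hρ : ρ0 < ρ1)
    (hlam : lam ∈ Icc (ρ1 + (1 - β) * (ρ0 - ρ1)) ρ1) : threshold ρ0 ρ1 β lam ∈ Icc 0 1 := by
  have hden : 0 < (1 - β) * (ρ1 - ρ0) := mul_pos (by linarith) (by linarith)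
  refine ⟨div_nonneg (by linarith [hlam.2]) hden.le, (div_le_one hden).mpr ?_⟩
  linarith [hlam.1]

theorem sub_div_eq_threshold_sub_mul (hβ : β < 1) (hρ : ρ0 < ρ1) (π : ℝ) :
    ρ1 / (1 - β) - π * (ρ1 - ρ0) - lam / (1 - β) = (threshold ρ0 ρ1 β lam - π) * (ρ1 - ρ0) := by
  have : 1 - β ≠ 0 := by linarith
  have : ρ1 - ρ0 ≠ 0 := by linarith
  unfold threshold
  field_simp
  ring

theorem value_of_le_threshold (hβ : β < 1) (hρ : ρ0 < ρ1) {π : ℝ}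
    (hπ : π ≤ threshold ρ0 ρ1 β lam) :
    value ρ0 ρ1 β lam π = ρ1 / (1 - β) - π * (ρ1 - ρ0) := by
  refine max_eq_left (sub_nonneg.mp ?_)
  rw [sub_div_eq_threshold_sub_mul hβ hρ]
  exact mul_nonneg (sub_nonneg.mpr hπ) (by linarith)

theorem value_of_threshold_le (hβ : β < 1) (hρ : ρ0 < ρ1) {π : ℝ}
    (hπ : threshold ρ0 ρ1 β lam ≤ π) : value ρ0 ρ1 β lam π = lam / (1 - β) := by
  refine max_eq_right (sub_nonpos.mp ?_)
  rw [sub_div_eq_threshold_sub_mul hβ hρ]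
  exact mul_nonpos_of_nonpos_of_nonneg (sub_nonpos.mpr hπ) (by linarith)

theorem lam_add_mul_value_of_threshold_le (hβ : β < 1) (hρ : ρ0 < ρ1) {y : ℝ}
    (hy : threshold ρ0 ρ1 β lam ≤ y) : lam + β * value ρ0 ρ1 β lam y = lam / (1 - β) := by
  rw [value_of_threshold_le hβ hρ hy, lam_add_mul_eq hβ, sub_self, mul_zero, add_zero]

theorem eq_threshold_of_indifferent (hβ : β < 1) (hρ : ρ0 < ρ1) {π y : ℝ} (hπy : π ≤ y)
    (h : ρ1 / (1 - β) - π * (ρ1 - ρ0) = lam + β * value ρ0 ρ1 β lam y) :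
    π = threshold ρ0 ρ1 β lam := by
  have hy : lam / (1 - β) ≤ value ρ0 ρ1 β lam y := div_le_value y
  rcases hy.eq_or_lt with hy | hy
  · rw [← hy, lam_add_mul_eq hβ, sub_self, mul_zero, add_zero, ← sub_eq_zero,
      sub_div_eq_threshold_sub_mul hβ hρ] at h
    rcases mul_eq_zero.mp h with h | h <;> linarith
  · -- then playing is strictly worse than `value π`, which forces `value π = λ/(1-β) < value y`
    have hlt := lam_add_mul_value_lt hβ hy
    have hmono : value ρ0 ρ1 β lam y ≤ value ρ0 ρ1 β lam π := value_antitone hρ.le hπy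
    have hplay_lt : ρ1 / (1 - β) - π * (ρ1 - ρ0) < value ρ0 ρ1 β lam π := by linarith
    have : value ρ0 ρ1 β lam π = lam / (1 - β) := (max_choice _ _).resolve_left hplay_lt.ne'
    linarith

end TypeB

open TypeB

theorem stmt_11_general (p ρ0 ρ1 β lam : ℝ)
    (hp0 : 0 < p) (hp1 : p < 1) (hr01 : ρ0 < ρ1)
    (hb0 : 0 < β) (hb1 : β < 1)
    (V : ℝ → ℝ → ℝ)
    (hVbd : ∀ lam : ℝ, ∃ C : ℝ, ∀ π ∈ Set.Icc (0:ℝ) 1, |V π lam| ≤ C)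
    (hVeq : ∀ lam : ℝ, ∀ π ∈ Set.Icc (0:ℝ) 1,
      V π lam = max (lam + β * V (π + p * (1 - π)) lam)
        (π * ρ0 + (1 - π) * ρ1 + β * V 0 lam))
    (hlam : lam ∈ Set.Icc (ρ1 + (1 - β) * (ρ0 - ρ1)) ρ1) :
    ∃ πT ∈ Set.Icc (0:ℝ) 1,
      (πT * ρ0 + (1 - πT) * ρ1 + β * V 0 lam = lam + β * V (πT + p * (1 - πT)) lam) ∧
      (∀ π' ∈ Set.Icc (0:ℝ) 1,
        π' * ρ0 + (1 - π') * ρ1 + β * V 0 lam = lam + β * V (π' + p * (1 - π')) lam →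
          π' = πT) ∧
      (∀ π ∈ Set.Icc (0:ℝ) 1,
        (π ≤ πT → V π lam = π * ρ0 + (1 - π) * ρ1 + β * V 0 lam) ∧
        (πT ≤ π → V π lam = lam + β * V (π + p * (1 - π)) lam)) := by
  have hle_next : ∀ π ∈ Icc (0:ℝ) 1, π ≤ π + p * (1 - π) := fun π hπ =>
    le_add_of_nonneg_right (mul_nonneg hp0.le (sub_nonneg.mpr hπ.2))
  have hnext : MapsTo (fun π => π + p * (1 - π)) (Icc (0:ℝ) 1) (Icc 0 1) := fun π hπ =>
    ⟨hπ.1.trans (hle_next π hπ), by nlinarith [hπ.1, hπ.2]⟩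
  have hzero : MapsTo (fun _ => (0:ℝ)) (Icc (0:ℝ) 1) (Icc 0 1) := fun _ _ =>
    left_mem_Icc.mpr zero_le_one
  have hWbd : ∃ C, ∀ π ∈ Icc (0:ℝ) 1, |value ρ0 ρ1 β lam π| ≤ C :=
    isCompact_Icc.exists_bound_of_continuousOn continuous_value.continuousOn
  have hVW : ∀ π ∈ Icc (0:ℝ) 1, V π lam = value ρ0 ρ1 β lam π :=
    eqOn_of_bellman (V := (V · lam)) hb0.le hb1 hnext hzero (hVbd lam) hWbd (hVeq lam)
      (fun π hπ => value_bellman hb0.le hb1 hr01.le hlam.2 (hle_next π hπ))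
  have hplay : ∀ π, π * ρ0 + (1 - π) * ρ1 + β * V 0 lam = ρ1 / (1 - β) - π * (ρ1 - ρ0) := by
    intro π
    rw [hVW 0 (left_mem_Icc.mpr zero_le_one), value_zero hb1 hlam.2, reward_add_mul_div_eq hb1]
  have hnotPlay : ∀ π ∈ Icc (0:ℝ) 1,
      lam + β * V (π + p * (1 - π)) lam = lam + β * value ρ0 ρ1 β lam (π + p * (1 - π)) :=
    fun π hπ => by rw [hVW _ (hnext hπ)]
  have hT := threshold_mem_Icc hb1 hr01 hlam
  refine ⟨threshold ρ0 ρ1 β lam, hT, ?_, ?_, fun π hπ => ⟨fun h => ?_, fun h => ?_⟩⟩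
  · rw [hplay, hnotPlay _ hT, lam_add_mul_value_of_threshold_le hb1 hr01 (hle_next _ hT),
      ← sub_eq_zero, sub_div_eq_threshold_sub_mul hb1 hr01, sub_self, zero_mul]
  · intro π hπ h
    rw [hplay, hnotPlay π hπ] at h
    exact eq_threshold_of_indifferent hb1 hr01 (hle_next π hπ) h
  · rw [hVW π hπ, hplay, value_of_le_threshold hb1 hr01 h]
  · rw [hVW π hπ, hnotPlay π hπ, value_of_threshold_le hb1 hr01 h,
      lam_add_mul_value_of_threshold_le hb1 hr01 (h.trans (hle_next π hπ))]

theorem stmt_11 (p ρ0 ρ1 β lam : ℝ)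
    (hp0 : 0 < p) (hp1 : p < 1) (hr0 : 0 < ρ0) (hr01 : ρ0 < ρ1) (hr1 : ρ1 < 1)
    (hb0 : 0 < β) (hb1 : β < 1)
    (V : ℝ → ℝ → ℝ)
    (hVbd : ∀ lam : ℝ, ∃ C : ℝ, ∀ π ∈ Set.Icc (0:ℝ) 1, |V π lam| ≤ C)
    (hVeq : ∀ lam : ℝ, ∀ π ∈ Set.Icc (0:ℝ) 1,
      V π lam = max (lam + β * V (π + p * (1 - π)) lam)
        (π * ρ0 + (1 - π) * ρ1 + β * V 0 lam))
    (hlam : lam ∈ Set.Icc (ρ1 + (1 - β) * (ρ0 - ρ1)) ρ1) :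
    ∃ πT ∈ Set.Icc (0:ℝ) 1,
      (πT * ρ0 + (1 - πT) * ρ1 + β * V 0 lam = lam + β * V (πT + p * (1 - πT)) lam) ∧
      (∀ π' ∈ Set.Icc (0:ℝ) 1,
        π' * ρ0 + (1 - π') * ρ1 + β * V 0 lam = lam + β * V (π' + p * (1 - π')) lam →
          π' = πT) ∧
      (∀ π ∈ Set.Icc (0:ℝ) 1,
        (π ≤ πT → V π lam = π * ρ0 + (1 - π) * ρ1 + β * V 0 lam) ∧
        (πT ≤ π → V π lam = lam + β * V (π + p * (1 - π)) lam)) :=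
  stmt_11_general p ρ0 ρ1 β lam hp0 hp1 hr01 hb0 hb1 V hVbd hVeq hlam
end

section
/- Let λ ∈ ℝ and suppose V has the single-threshold structure with threshold π_T ∈ (0,1]: V(π,λ) = V1(π,λ) for all π ∈ [0,1] with π ≤ π_T and V(π,λ) = V0(π,λ) for all π ∈ [0,1] with π ≥ π_T. Let K := min{k ≥ 0 : (1−p)^k < π_T} (which is finite since π_T > 0). Then V0(1,λ) = λ·(1−β^K) / ((1−β^{K+1})·(1−β)) + β^K·(ρ1 + (ρ0−ρ1)·(1−p)^K) / (1−β^{K+1}). -/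
/-!
Below the threshold the agent plays, above it it waits, and the belief decays geometrically
from `1` along `(1 - p) ^ k`. Starting from `π = 1` the agent therefore waits exactly `K` periods,
collecting `λ` each time, and then plays once, after which the process restarts at `π = 1`.
Hence `W := V(1, λ) = V0(1, λ)` satisfies the renewal equation
`W = (1 + β + ⋯ + β ^ (K - 1)) λ + β ^ K (ρ1 + (ρ0 - ρ1) (1 - p) ^ K + β W)`, which is solved for `W`.
-/

open Finset

theorem pow_lt_and_forall_le_of_eq_sInf {q t : ℝ} {K : ℕ} (hq : q < 1) (ht : 0 < t)
    (hK : K = sInf {k : ℕ | q ^ k < t}) :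
    q ^ K < t ∧ ∀ k < K, t ≤ q ^ k := by
  subst hK
  refine ⟨Nat.sInf_mem (exists_pow_lt_of_lt_one ht hq), fun k hk => ?_⟩
  simpa using Nat.notMem_of_lt_sInf hk

theorem eq_geom_sum_mul_add_pow_mul_of_forall_lt {β c : ℝ} {f : ℕ → ℝ} {K : ℕ}
    (hf : ∀ k < K, f k = c + β * f (k + 1)) :
    f 0 = (∑ i ∈ range K, β ^ i) * c + β ^ K * f K := by
  suffices h : ∀ n ≤ K, f 0 = (∑ i ∈ range n, β ^ i) * c + β ^ n * f n from h K le_rfl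
  intro n hn
  induction n with
  | zero => simp
  | succ n ih =>
    rw [ih (by omega), hf n (by omega), sum_range_succ]
    ring

theorem eq_of_eq_geom_sum_mul_add_pow_mul {β c a W : ℝ} {K : ℕ} (hβ0 : 0 ≤ β) (hβ1 : β < 1)
    (h : W = (∑ i ∈ range K, β ^ i) * c + β ^ K * (a + β * W)) :
    W = c * (1 - β ^ K) / ((1 - β ^ (K + 1)) * (1 - β)) + β ^ K * a / (1 - β ^ (K + 1)) := by
  have hβ : 1 - β ≠ 0 := by linarith
  have hβK : 1 - β ^ (K + 1) ≠ 0 := (sub_pos.2 (pow_lt_one₀ hβ0 hβ1 K.succ_ne_zero)).ne'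
  field_simp
  linear_combination (1 - β) * h - c * geom_sum_mul β K

theorem stmt_13_general (p ρ0 ρ1 β lam πT : ℝ)
    (hp0 : 0 < p) (hp1 : p < 1)
    (hb0 : 0 < β) (hb1 : β < 1)
    (V : ℝ → ℝ → ℝ)
    (hπT : πT ∈ Set.Ioc (0:ℝ) 1)
    (hthresh : ∀ π ∈ Set.Icc (0:ℝ) 1,
      (π ≤ πT → V π lam = π * ρ0 + (1 - π) * ρ1 + β * V 1 lam) ∧
      (πT ≤ π → V π lam = lam + β * V ((1 - p) * π) lam))
    (K : ℕ) (hK : K = sInf {k : ℕ | (1 - p) ^ k < πT}) :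
    lam + β * V ((1 - p) * 1) lam =
      lam * (1 - β ^ K) / ((1 - β ^ (K + 1)) * (1 - β)) +
        β ^ K * (ρ1 + (ρ0 - ρ1) * (1 - p) ^ K) / (1 - β ^ (K + 1)) := by
  obtain ⟨hplayK, hwait⟩ := pow_lt_and_forall_le_of_eq_sInf (by linarith) hπT.1 hK
  have hmem (k : ℕ) : (1 - p) ^ k ∈ Set.Icc (0:ℝ) 1 :=
    ⟨pow_nonneg (by linarith) k, pow_le_one₀ (by linarith) (by linarith)⟩
  have hV1 : V 1 lam = lam + β * V ((1 - p) * 1) lam := (hthresh 1 ⟨zero_le_one, le_rfl⟩).2 hπT.2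
  have hplay := (hthresh _ (hmem K)).1 hplayK.le
  have hrenewal := eq_geom_sum_mul_add_pow_mul_of_forall_lt (β := β) (c := lam)
    (f := fun k => V ((1 - p) ^ k) lam) fun k hk => by
      rw [(hthresh _ (hmem k)).2 (hwait k hk), pow_succ']
  simp only [pow_zero, hplay] at hrenewal
  rw [← hV1]
  refine eq_of_eq_geom_sum_mul_add_pow_mul hb0.le hb1 (hrenewal.trans ?_)
  ring

theorem stmt_13 (p ρ0 ρ1 β lam πT : ℝ)
    (hp0 : 0 < p) (hp1 : p < 1) (hr0 : 0 < ρ0) (hr01 : ρ0 < ρ1) (hr1 : ρ1 < 1)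
    (hb0 : 0 < β) (hb1 : β < 1)
    (V : ℝ → ℝ → ℝ)
    (hVbd : ∀ lam : ℝ, ∃ C : ℝ, ∀ π ∈ Set.Icc (0:ℝ) 1, |V π lam| ≤ C)
    (hVeq : ∀ lam : ℝ, ∀ π ∈ Set.Icc (0:ℝ) 1,
      V π lam = max (lam + β * V ((1 - p) * π) lam)
        (π * ρ0 + (1 - π) * ρ1 + β * V 1 lam))
    (hπT : πT ∈ Set.Ioc (0:ℝ) 1)
    (hthresh : ∀ π ∈ Set.Icc (0:ℝ) 1,
      (π ≤ πT → V π lam = π * ρ0 + (1 - π) * ρ1 + β * V 1 lam) ∧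
      (πT ≤ π → V π lam = lam + β * V ((1 - p) * π) lam))
    (K : ℕ) (hK : K = sInf {k : ℕ | (1 - p) ^ k < πT}) :
    lam + β * V ((1 - p) * 1) lam =
      lam * (1 - β ^ K) / ((1 - β ^ (K + 1)) * (1 - β)) +
        β ^ K * (ρ1 + (ρ0 - ρ1) * (1 - p) ^ K) / (1 - β ^ (K + 1)) :=
  stmt_13_general p ρ0 ρ1 β lam πT hp0 hp1 hb0 hb1 V hπT hthresh K hK
end

section
/- Let λ_L := ρ0 + β·p·(ρ0 − ρ1) and λ_H := ρ1. For every fixed π ∈ [0,1], the function λ ↦ V1(π,λ) − V0(π,λ) is decreasing on [λ_L, λ_H]: for λ_L ≤ λ1 < λ2 ≤ λ_H, V1(π,λ2) − V0(π,λ2) ≤ V1(π,λ1) − V0(π,λ1). -/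
/-!
Write `f q = V(q, λ₂) - V(q, λ₁)` and `δ = λ₂ - λ₁`, and compare the Bellman equations at `λ₁`
and `λ₂` term by term: `f q` lies between the minimum and the maximum of `δ + β f((1-p)q)` (not
playing) and `β f 1` (playing). The upper bound gives `(1 - β) sup f ≤ δ`. The lower bound gives
`inf f ≥ min (δ + β inf f) (β f 1)`; in the first case `inf f ≥ sup f`, and in the second
`β f 1 - β inf f ≤ (1 - β) inf f ≤ δ`. Either way `β (f 1 - f q) ≤ δ` for every `q`, which is the
claimed monotonicity of `V1 - V0`.
-/

open Set

lemma min_sub_sub_le_max_sub_max (a b c d : ℝ) : min (a - c) (b - d) ≤ max a b - max c d := by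
  have h := max_sub_max_le_max c d a b
  rw [← neg_sub a c, ← neg_sub b d, max_neg_neg] at h
  linarith

lemma sub_mem_bounds_of_eq_max {u v a b c d : ℝ} (hu : u = max a b) (hv : v = max c d) :
    min (a - c) (b - d) ≤ u - v ∧ u - v ≤ max (a - c) (b - d) := by
  subst hu hv
  exact ⟨min_sub_sub_le_max_sub_max a b c d, max_sub_max_le_max a b c d⟩

section BellmanDifference

variable {α : Type*} {f : α → ℝ} {g : α → α} {a : α} {β δ : ℝ}

lemma one_sub_mul_ciSup_le (hf : BddAbove (range f)) (hβ : 0 ≤ β) (hδ : 0 ≤ δ)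
    (hle : ∀ x, f x ≤ max (δ + β * f (g x)) (β * f a)) :
    (1 - β) * ⨆ x, f x ≤ δ := by
  have : Nonempty α := ⟨a⟩
  have hS : ⨆ x, f x ≤ δ + β * ⨆ x, f x := by
    refine ciSup_le fun x => (hle x).trans (max_le ?_ ?_)
    · gcongr
      exact le_ciSup hf (g x)
    · have := mul_le_mul_of_nonneg_left (le_ciSup hf a) hβ
      linarith
  linarith

lemma mul_sub_le_of_min_le_of_le_max (hf : BddAbove (range f)) (hf' : BddBelow (range f))
    (hβ0 : 0 ≤ β) (hβ1 : β < 1) (hδ : 0 ≤ δ)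
    (hge : ∀ x, min (δ + β * f (g x)) (β * f a) ≤ f x)
    (hle : ∀ x, f x ≤ max (δ + β * f (g x)) (β * f a)) (x : α) :
    β * (f a - f x) ≤ δ := by
  have : Nonempty α := ⟨a⟩
  set S := ⨆ y, f y
  set I := ⨅ y, f y
  have hSδ : (1 - β) * S ≤ δ := one_sub_mul_ciSup_le hf hβ0 hδ hle
  have hIS : I ≤ S := ciInf_le_ciSup hf' hf
  have hI : min (δ + β * I) (β * f a) ≤ I := by
    refine le_ciInf fun y => le_trans ?_ (hge y)
    gcongr
    exact ciInf_le hf' (g y)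
  have hIx : β * I ≤ β * f x := mul_le_mul_of_nonneg_left (ciInf_le hf' x) hβ0
  suffices β * f a - β * I ≤ δ by linarith
  rcases le_total (δ + β * I) (β * f a) with h | h
  · rw [min_eq_left h] at hI
    have hSI : S ≤ I := le_of_mul_le_mul_left (by linarith) (sub_pos.2 hβ1)
    nlinarith [le_ciSup hf a]
  · rw [min_eq_right h] at hI
    nlinarith

end BellmanDifference

theorem stmt_15_general (p ρ0 ρ1 β : ℝ)
    (hp0 : 0 < p) (hp1 : p < 1)
    (hb0 : 0 < β) (hb1 : β < 1)
    (V : ℝ → ℝ → ℝ)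
    (hVbd : ∀ lam : ℝ, ∃ C : ℝ, ∀ π ∈ Set.Icc (0:ℝ) 1, |V π lam| ≤ C)
    (hVeq : ∀ lam : ℝ, ∀ π ∈ Set.Icc (0:ℝ) 1,
      V π lam = max (lam + β * V ((1 - p) * π) lam)
        (π * ρ0 + (1 - π) * ρ1 + β * V 1 lam)) :
    ∀ π ∈ Set.Icc (0:ℝ) 1, ∀ lam1 lam2 : ℝ,
      ρ0 + β * p * (ρ0 - ρ1) ≤ lam1 → lam1 < lam2 → lam2 ≤ ρ1 →
      (π * ρ0 + (1 - π) * ρ1 + β * V 1 lam2) - (lam2 + β * V ((1 - p) * π) lam2) ≤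
      (π * ρ0 + (1 - π) * ρ1 + β * V 1 lam1) - (lam1 + β * V ((1 - p) * π) lam1) := by
  intro π hπ lam1 lam2 _ h12 _
  let f : Icc (0:ℝ) 1 → ℝ := fun q => V q lam2 - V q lam1
  let c : Icc (0:ℝ) 1 := ⟨1 - p, by linarith, by linarith⟩
  obtain ⟨C1, hC1⟩ := hVbd lam1
  obtain ⟨C2, hC2⟩ := hVbd lam2
  have hf : ∀ q, |f q| ≤ C2 + C1 := fun q =>
    (abs_sub _ _).trans (add_le_add (hC2 q q.2) (hC1 q q.2))
  have hbdd : BddAbove (range f) ∧ BddBelow (range f) := by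
    refine ⟨⟨C2 + C1, ?_⟩, ⟨-(C2 + C1), ?_⟩⟩ <;> rintro _ ⟨q, rfl⟩
    exacts [(abs_le.1 (hf q)).2, (abs_le.1 (hf q)).1]
  have hbounds : ∀ q, min (lam2 - lam1 + β * f (c * q)) (β * f 1) ≤ f q ∧
      f q ≤ max (lam2 - lam1 + β * f (c * q)) (β * f 1) := fun q => by
    convert sub_mem_bounds_of_eq_max (hVeq lam2 q q.2) (hVeq lam1 q q.2) using 3 <;>
      simp only [f, c, Icc.coe_mul, Icc.coe_one] <;> ring
  have key := mul_sub_le_of_min_le_of_le_max hbdd.1 hbdd.2 hb0.le hb1 (sub_nonneg.2 h12.le)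
    (fun q => (hbounds q).1) (fun q => (hbounds q).2) (c * ⟨π, hπ⟩)
  simp only [f, c, Icc.coe_mul, Icc.coe_one] at key
  linarith

theorem stmt_15 (p ρ0 ρ1 β : ℝ)
    (hp0 : 0 < p) (hp1 : p < 1) (hr0 : 0 < ρ0) (hr01 : ρ0 < ρ1) (hr1 : ρ1 < 1)
    (hb0 : 0 < β) (hb1 : β < 1)
    (V : ℝ → ℝ → ℝ)
    (hVbd : ∀ lam : ℝ, ∃ C : ℝ, ∀ π ∈ Set.Icc (0:ℝ) 1, |V π lam| ≤ C)
    (hVeq : ∀ lam : ℝ, ∀ π ∈ Set.Icc (0:ℝ) 1,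
      V π lam = max (lam + β * V ((1 - p) * π) lam)
        (π * ρ0 + (1 - π) * ρ1 + β * V 1 lam)) :
    ∀ π ∈ Set.Icc (0:ℝ) 1, ∀ lam1 lam2 : ℝ,
      ρ0 + β * p * (ρ0 - ρ1) ≤ lam1 → lam1 < lam2 → lam2 ≤ ρ1 →
      (π * ρ0 + (1 - π) * ρ1 + β * V 1 lam2) - (lam2 + β * V ((1 - p) * π) lam2) ≤
      (π * ρ0 + (1 - π) * ρ1 + β * V 1 lam1) - (lam1 + β * V ((1 - p) * π) lam1) :=
  stmt_15_general p ρ0 ρ1 β hp0 hp1 hb0 hb1 V hVbd hVeq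
end

section
/- The type-B arm is Whittle indexable on [λ_L, λ_H], where λ_L := ρ1 + (1−β)·(ρ0 − ρ1) and λ_H := ρ1: defining P(λ) := {π ∈ [0,1] : V1(π,λ) ≤ V0(π,λ)} (the set of beliefs at which not playing is optimal under subsidy λ), one has P(λ1) ⊆ P(λ2) whenever λ_L ≤ λ1 < λ2 ≤ λ_H. -/
/-!
For a subsidy `λ ≤ ρ₁` the value function has the closed form
`V(π, λ) = max (r π + β ρ₁ / (1 - β)) (λ / (1 - β))` with `r π = π ρ₀ + (1 - π) ρ₁`:
play now and forever after (each reset to belief `0` earns `ρ₁`), or never play.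
This candidate solves the Bellman equation, which is a `β`-contraction, so it is `V`.
In the closed form the value at belief `0` does not depend on `λ`, and the not-play value
is monotone in `λ`, so the passive set can only grow with `λ`.
-/

open Set Filter Topology

theorem nonpos_of_le_mul_of_bddAbove {α : Type*} {s : Set α} {d : α → ℝ} {β C : ℝ}
    (hβ0 : 0 ≤ β) (hβ1 : β < 1) (hC : ∀ x ∈ s, d x ≤ C)
    (hd : ∀ x ∈ s, ∃ y ∈ s, d x ≤ β * d y) :
    ∀ x ∈ s, d x ≤ 0 := by
  have hpow : ∀ n : ℕ, ∀ x ∈ s, d x ≤ β ^ n * C := by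
    intro n
    induction n with
    | zero => simpa using hC
    | succ n ih =>
      intro x hx
      obtain ⟨y, hy, hxy⟩ := hd x hx
      calc d x ≤ β * d y := hxy
        _ ≤ β * (β ^ n * C) := mul_le_mul_of_nonneg_left (ih y hy) hβ0
        _ = β ^ (n + 1) * C := by ring
  intro x hx
  have hlim : Tendsto (fun n : ℕ => β ^ n * C) atTop (𝓝 0) := by
    simpa using (tendsto_pow_atTop_nhds_zero_of_lt_one hβ0 hβ1).mul_const C
  exact ge_of_tendsto' hlim fun n => hpow n x hx

theorem eqOn_of_bellman_max {α : Type*} {s : Set α} {f : α → α} {z : α} {a b V W : α → ℝ}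
    {β : ℝ} (hβ0 : 0 ≤ β) (hβ1 : β < 1) (hf : MapsTo f s s) (hz : z ∈ s)
    (hV : ∃ C, ∀ x ∈ s, |V x| ≤ C) (hW : ∃ C, ∀ x ∈ s, |W x| ≤ C)
    (hVeq : ∀ x ∈ s, V x = max (a x + β * V (f x)) (b x + β * V z))
    (hWeq : ∀ x ∈ s, W x = max (a x + β * W (f x)) (b x + β * W z)) :
    EqOn V W s := by
  obtain ⟨CV, hCV⟩ := hV
  obtain ⟨CW, hCW⟩ := hW
  have hdist : ∀ x ∈ s, |V x - W x| ≤ 0 := by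
    refine nonpos_of_le_mul_of_bddAbove hβ0 hβ1 (C := CV + CW)
      (fun x hx => (abs_sub _ _).trans (add_le_add (hCV x hx) (hCW x hx))) ?_
    intro x hx
    have hstep : |V x - W x| ≤ max (β * |V (f x) - W (f x)|) (β * |V z - W z|) := by
      rw [hVeq x hx, hWeq x hx]
      refine (abs_max_sub_max_le_max _ _ _ _).trans (le_of_eq ?_)
      simp only [add_sub_add_left_eq_sub, ← mul_sub, abs_mul, abs_of_nonneg hβ0]
    rcases le_max_iff.mp hstep with h | h
    · exact ⟨f x, hf hx, h⟩
    · exact ⟨z, hz, h⟩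
  exact fun x hx => sub_eq_zero.mp (abs_nonpos_iff.mp (hdist x hx))

theorem add_mul_one_sub_mem_Icc {p π : ℝ} (hp0 : 0 ≤ p) (hp1 : p ≤ 1) (hπ : π ∈ Icc (0 : ℝ) 1) :
    π + p * (1 - π) ∈ Icc (0 : ℝ) 1 :=
  (convex_Icc 0 1).add_smul_sub_mem hπ (right_mem_Icc.mpr zero_le_one) ⟨hp0, hp1⟩

section ClosedForm

variable (ρ0 ρ1 β : ℝ)

noncomputable def closedFormValue (lam π : ℝ) : ℝ :=
  max (π * ρ0 + (1 - π) * ρ1 + β * (ρ1 / (1 - β))) (lam / (1 - β))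

variable {ρ0 ρ1 β}

theorem closedFormValue_zero (hβ1 : β < 1) {lam : ℝ} (hlam : lam ≤ ρ1) :
    closedFormValue ρ0 ρ1 β lam 0 = ρ1 / (1 - β) := by
  have hβ : 0 < 1 - β := sub_pos.mpr hβ1
  have hplay : (0 : ℝ) * ρ0 + (1 - 0) * ρ1 + β * (ρ1 / (1 - β)) = ρ1 / (1 - β) := by
    field_simp
    ring
  rw [closedFormValue, hplay]
  exact max_eq_left (div_le_div_of_nonneg_right hlam hβ.le)

theorem closedFormValue_mono (hβ1 : β < 1) (π : ℝ) :
    Monotone fun lam => closedFormValue ρ0 ρ1 β lam π := fun _ _ h =>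
  max_le_max le_rfl (div_le_div_of_nonneg_right h (sub_pos.mpr hβ1).le)

theorem closedFormValue_bounded (lam : ℝ) :
    ∃ C, ∀ π ∈ Icc (0 : ℝ) 1, |closedFormValue ρ0 ρ1 β lam π| ≤ C :=
  isCompact_Icc.exists_bound_of_continuousOn (f := closedFormValue ρ0 ρ1 β lam)
    (by unfold closedFormValue; fun_prop)

theorem closedFormValue_bellman {p : ℝ} (hp0 : 0 ≤ p) (hr01 : ρ0 ≤ ρ1) (hβ0 : 0 ≤ β)
    (hβ1 : β < 1) {lam π : ℝ} (hlam : lam ≤ ρ1) (hπ1 : π ≤ 1) :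
    closedFormValue ρ0 ρ1 β lam π =
      max (lam + β * closedFormValue ρ0 ρ1 β lam (π + p * (1 - π)))
        (π * ρ0 + (1 - π) * ρ1 + β * closedFormValue ρ0 ρ1 β lam 0) := by
  rw [closedFormValue_zero hβ1 hlam]
  set q := π + p * (1 - π)
  set S := ρ1 / (1 - β)
  set T := lam / (1 - β)
  set A := π * ρ0 + (1 - π) * ρ1 + β * S
  have hlamT : lam = (1 - β) * T := by
    simp only [T]
    field_simp [(sub_pos.mpr hβ1).ne']
  -- Playing later is worse than playing now: rewards only drop as the belief moves up.
  have hplay : q * ρ0 + (1 - q) * ρ1 + β * S ≤ A := by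
    have : π ≤ q := le_add_of_nonneg_right (mul_nonneg hp0 (sub_nonneg.mpr hπ1))
    simp only [A]
    nlinarith
  show max A T = max (lam + β * max (q * ρ0 + (1 - q) * ρ1 + β * S) T) A
  apply le_antisymm
  · refine max_le (le_max_right _ _) ?_
    calc T = lam + β * T := by rw [hlamT]; ring
      _ ≤ lam + β * max (q * ρ0 + (1 - q) * ρ1 + β * S) T := by
        gcongr
        exact le_max_right _ _
      _ ≤ _ := le_max_left _ _
  · refine max_le ?_ (le_max_left _ _)
    calc lam + β * max (q * ρ0 + (1 - q) * ρ1 + β * S) T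
        ≤ (1 - β) * max A T + β * max A T := by
          rw [hlamT]
          gcongr
          exact le_max_right _ _
      _ = max A T := by ring

theorem eqOn_closedFormValue {p lam : ℝ} {V : ℝ → ℝ} (hp0 : 0 ≤ p) (hp1 : p ≤ 1)
    (hr01 : ρ0 ≤ ρ1) (hβ0 : 0 ≤ β) (hβ1 : β < 1) (hlam : lam ≤ ρ1)
    (hVbd : ∃ C, ∀ π ∈ Icc (0 : ℝ) 1, |V π| ≤ C)
    (hVeq : ∀ π ∈ Icc (0 : ℝ) 1,
      V π = max (lam + β * V (π + p * (1 - π))) (π * ρ0 + (1 - π) * ρ1 + β * V 0)) :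
    EqOn V (closedFormValue ρ0 ρ1 β lam) (Icc 0 1) :=
  eqOn_of_bellman_max hβ0 hβ1 (fun _ hπ => add_mul_one_sub_mem_Icc hp0 hp1 hπ)
    (left_mem_Icc.mpr zero_le_one) hVbd (closedFormValue_bounded lam) hVeq
    (fun _ hπ => closedFormValue_bellman hp0 hr01 hβ0 hβ1 hlam hπ.2)

end ClosedForm

theorem stmt_17_general (p ρ0 ρ1 β : ℝ)
    (hp0 : 0 < p) (hp1 : p < 1) (hr01 : ρ0 < ρ1)
    (hb0 : 0 < β) (hb1 : β < 1)
    (V : ℝ → ℝ → ℝ)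
    (hVbd : ∀ lam : ℝ, ∃ C : ℝ, ∀ π ∈ Set.Icc (0:ℝ) 1, |V π lam| ≤ C)
    (hVeq : ∀ lam : ℝ, ∀ π ∈ Set.Icc (0:ℝ) 1,
      V π lam = max (lam + β * V (π + p * (1 - π)) lam)
        (π * ρ0 + (1 - π) * ρ1 + β * V 0 lam)) :
    ∀ lam1 lam2 : ℝ,
      ρ1 + (1 - β) * (ρ0 - ρ1) ≤ lam1 → lam1 < lam2 → lam2 ≤ ρ1 →
      {π : ℝ | π ∈ Set.Icc (0:ℝ) 1 ∧
          π * ρ0 + (1 - π) * ρ1 + β * V 0 lam1 ≤ lam1 + β * V (π + p * (1 - π)) lam1} ⊆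
      {π : ℝ | π ∈ Set.Icc (0:ℝ) 1 ∧
          π * ρ0 + (1 - π) * ρ1 + β * V 0 lam2 ≤ lam2 + β * V (π + p * (1 - π)) lam2} := by
  intro lam1 lam2 _ h12 hlam2 π ⟨hπ, hpassive⟩
  have hlam1 : lam1 ≤ ρ1 := h12.le.trans hlam2
  have hq : π + p * (1 - π) ∈ Icc (0 : ℝ) 1 := add_mul_one_sub_mem_Icc hp0.le hp1.le hπ
  have h0 : (0 : ℝ) ∈ Icc (0 : ℝ) 1 := left_mem_Icc.mpr zero_le_one
  have hV : ∀ lam ≤ ρ1, ∀ x ∈ Icc (0 : ℝ) 1, V x lam = closedFormValue ρ0 ρ1 β lam x :=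
    fun lam hlam => eqOn_closedFormValue hp0.le hp1.le hr01.le hb0.le hb1 hlam (hVbd lam) (hVeq lam)
  rw [hV lam1 hlam1 0 h0, hV lam1 hlam1 _ hq, closedFormValue_zero hb1 hlam1] at hpassive
  refine ⟨hπ, ?_⟩
  rw [hV lam2 hlam2 0 h0, hV lam2 hlam2 _ hq, closedFormValue_zero hb1 hlam2]
  exact hpassive.trans <| add_le_add h12.le <|
    mul_le_mul_of_nonneg_left (closedFormValue_mono hb1 _ h12.le) hb0.le

theorem stmt_17 (p ρ0 ρ1 β : ℝ)
    (hp0 : 0 < p) (hp1 : p < 1) (hr0 : 0 < ρ0) (hr01 : ρ0 < ρ1) (hr1 : ρ1 < 1)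
    (hb0 : 0 < β) (hb1 : β < 1)
    (V : ℝ → ℝ → ℝ)
    (hVbd : ∀ lam : ℝ, ∃ C : ℝ, ∀ π ∈ Set.Icc (0:ℝ) 1, |V π lam| ≤ C)
    (hVeq : ∀ lam : ℝ, ∀ π ∈ Set.Icc (0:ℝ) 1,
      V π lam = max (lam + β * V (π + p * (1 - π)) lam)
        (π * ρ0 + (1 - π) * ρ1 + β * V 0 lam)) :
    ∀ lam1 lam2 : ℝ,
      ρ1 + (1 - β) * (ρ0 - ρ1) ≤ lam1 → lam1 < lam2 → lam2 ≤ ρ1 →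
      {π : ℝ | π ∈ Set.Icc (0:ℝ) 1 ∧
          π * ρ0 + (1 - π) * ρ1 + β * V 0 lam1 ≤ lam1 + β * V (π + p * (1 - π)) lam1} ⊆
      {π : ℝ | π ∈ Set.Icc (0:ℝ) 1 ∧
          π * ρ0 + (1 - π) * ρ1 + β * V 0 lam2 ≤ lam2 + β * V (π + p * (1 - π)) lam2} :=
  stmt_17_general p ρ0 ρ1 β hp0 hp1 hr01 hb0 hb1 V hVbd hVeq
end

section
/- For every π ∈ (0,1], letting K := min{k ≥ 0 : (1−p)^k < π}, the Whittle index W(π) := inf{λ ∈ ℝ : V1(π,λ) ≤ V0(π,λ)} of the type-A arm equals ρ1 + β^{K+1}·(ρ0 − ρ1)·(1−p)^K + ((ρ0 − ρ1)/(1−β))·(1 − β^{K+1})·(1 − β·(1−p))·π. -/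
/-!
Fix the subsidy `λ` and write `U = V (·, λ)` and `q = 1 - p`. Playing at belief `x` rather than
waiting once and then playing is worth an amount that is affine in `x`, decreasing in `x` and
increasing in the continuation value `U 1`. The policy "wait `K` times, then play" has value
`cycleValue λ ≤ U 1` at belief `1`, and the claimed index is exactly the `λ` at which this
advantage at `π` vanishes once `U 1` is replaced by `cycleValue λ`.

Below that `λ` the advantage is positive along the whole orbit `q ^ j * π`, and since `U` is
bounded and `β < 1` this forces playing at `π` to be strictly better. At that `λ` the threshold
policy (play as soon as the belief drops below `π`) is a supersolution of the Bellman equation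
along the orbit of `1`, so `U 1 = cycleValue λ` and waiting is optimal at `π`. Both comparisons
are one contraction argument: a function bounded above whose upper bounds `s` can always be
improved to `c + β * max s 0`, with `c ≤ 0`, is bounded by `c`.
-/

open Set

theorem le_of_forall_le_imp_le_add_mul_max {ι : Type*} {f : ι → ℝ} {β c : ℝ}
    (hβ1 : β < 1) (hc : c ≤ 0) (hf : BddAbove (range f))
    (h : ∀ s, (∀ i, f i ≤ s) → ∀ i, f i ≤ c + β * max s 0) (i : ι) : f i ≤ c := by
  have : Nonempty ι := ⟨i⟩
  have hle := h (⨆ j, f j) (le_ciSup hf)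
  have hsup : ⨆ j, f j ≤ 0 := by
    by_contra! hpos
    have := ciSup_le hle
    rw [max_eq_left hpos.le] at this
    nlinarith
  simpa [max_eq_right hsup] using hle i

def expectedReward (ρ0 ρ1 x : ℝ) : ℝ := x * ρ0 + (1 - x) * ρ1

def IsBellmanFixedPoint (q ρ0 ρ1 β lam : ℝ) (U : ℝ → ℝ) : Prop :=
  ∀ x ∈ Icc (0 : ℝ) 1, U x = max (lam + β * U (q * x)) (expectedReward ρ0 ρ1 x + β * U 1)

def playAdvantage (q ρ0 ρ1 β lam v x : ℝ) : ℝ :=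
  expectedReward ρ0 ρ1 x + β * v - (lam + β * (expectedReward ρ0 ρ1 (q * x) + β * v))

/-- The value at belief `1` of the policy that waits `K` times and then plays, forever. -/
noncomputable def cycleValue (q ρ0 ρ1 β lam : ℝ) (K : ℕ) : ℝ :=
  (lam * ∑ i ∈ Finset.range K, β ^ i + β ^ K * expectedReward ρ0 ρ1 (q ^ K)) /
    (1 - β ^ (K + 1))

/-- The value at belief `q ^ j` of waiting until the belief is `q ^ K` (if it is not yet) and then
playing, with continuation value `v`; the truncated subtraction `K - j` is `0` once `K ≤ j`. -/
def thresholdValue (q ρ0 ρ1 β lam v : ℝ) (K j : ℕ) : ℝ :=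
  lam * ∑ i ∈ Finset.range (K - j), β ^ i +
    β ^ (K - j) * (expectedReward ρ0 ρ1 (q ^ max j K) + β * v)

noncomputable def whittleFormula (q ρ0 ρ1 β π : ℝ) (K : ℕ) : ℝ :=
  ρ1 + β ^ (K + 1) * (ρ0 - ρ1) * q ^ K +
    ((ρ0 - ρ1) / (1 - β)) * (1 - β ^ (K + 1)) * (1 - β * q) * π

variable {q ρ0 ρ1 β lam π : ℝ} {U : ℝ → ℝ}

theorem min_le_expectedReward {x : ℝ} (hx : x ∈ Icc (0 : ℝ) 1) :
    min ρ0 ρ1 ≤ expectedReward ρ0 ρ1 x := by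
  unfold expectedReward
  nlinarith [hx.1, hx.2, min_le_left ρ0 ρ1, min_le_right ρ0 ρ1]

theorem pow_mul_mem_Icc (hq0 : 0 ≤ q) (hq1 : q ≤ 1) {x : ℝ} (hx : x ∈ Icc (0 : ℝ) 1)
    (j : ℕ) :
    q ^ j * x ∈ Icc (0 : ℝ) 1 :=
  unitInterval.mul_mem ⟨pow_nonneg hq0 j, pow_le_one₀ hq0 hq1⟩ hx

namespace IsBellmanFixedPoint

theorem wait_le (hU : IsBellmanFixedPoint q ρ0 ρ1 β lam U) {x : ℝ}
    (hx : x ∈ Icc (0 : ℝ) 1) :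
    lam + β * U (q * x) ≤ U x :=
  (hU x hx).ge.trans' (le_max_left _ _)

theorem play_le (hU : IsBellmanFixedPoint q ρ0 ρ1 β lam U) {x : ℝ}
    (hx : x ∈ Icc (0 : ℝ) 1) :
    expectedReward ρ0 ρ1 x + β * U 1 ≤ U x :=
  (hU x hx).ge.trans' (le_max_right _ _)

theorem geom_sum_wait_le (hU : IsBellmanFixedPoint q ρ0 ρ1 β lam U) (hβ0 : 0 ≤ β)
    (hq0 : 0 ≤ q) (hq1 : q ≤ 1) (k : ℕ) :
    lam * ∑ i ∈ Finset.range k, β ^ i + β ^ k * U (q ^ k) ≤ U 1 := by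
  induction k with
  | zero => simp
  | succ k ih =>
    have hwait := hU.wait_le (pow_mul_mem_Icc hq0 hq1 (right_mem_Icc.2 zero_le_one) k)
    rw [mul_one, ← pow_succ'] at hwait
    calc lam * ∑ i ∈ Finset.range (k + 1), β ^ i + β ^ (k + 1) * U (q ^ (k + 1))
        = lam * ∑ i ∈ Finset.range k, β ^ i + β ^ k * (lam + β * U (q ^ (k + 1))) := by
          rw [Finset.sum_range_succ]; ring
      _ ≤ lam * ∑ i ∈ Finset.range k, β ^ i + β ^ k * U (q ^ k) := by gcongr
      _ ≤ U 1 := ih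

theorem cycleValue_le (hU : IsBellmanFixedPoint q ρ0 ρ1 β lam U) (hβ0 : 0 ≤ β)
    (hβ1 : β < 1)
    (hq0 : 0 ≤ q) (hq1 : q ≤ 1) (K : ℕ) : cycleValue q ρ0 ρ1 β lam K ≤ U 1 := by
  have hplay := hU.play_le (pow_mul_mem_Icc hq0 hq1 (right_mem_Icc.2 zero_le_one) K)
  rw [mul_one] at hplay
  have hwait := hU.geom_sum_wait_le hβ0 hq0 hq1 K
  have hβK : β ^ (K + 1) < 1 := pow_lt_one₀ hβ0 hβ1 K.succ_ne_zero
  rw [cycleValue, div_le_iff₀ (by linarith), pow_succ]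
  nlinarith [mul_le_mul_of_nonneg_left hplay (pow_nonneg hβ0 K)]

end IsBellmanFixedPoint

theorem playAdvantage_le_playAdvantage (hρ : ρ0 ≤ ρ1) (hβ0 : 0 ≤ β) (hβ1 : β ≤ 1)
    (hβq : β * q ≤ 1) {x y v w : ℝ} (hxy : x ≤ y) (hvw : v ≤ w) :
    playAdvantage q ρ0 ρ1 β lam v y ≤ playAdvantage q ρ0 ρ1 β lam w x := by
  unfold playAdvantage expectedReward
  nlinarith [mul_nonneg (mul_nonneg (sub_nonneg.2 hρ) (sub_nonneg.2 hβq)) (sub_nonneg.2 hxy),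
    mul_nonneg (mul_nonneg hβ0 (sub_nonneg.2 hβ1)) (sub_nonneg.2 hvw)]

/-- `whittleFormula` is the subsidy at which playing at `π` and waiting once are equally good,
when after playing one follows the `K`-cycle. -/
theorem playAdvantage_cycleValue (hβ0 : 0 ≤ β) (hβ1 : β < 1) (K : ℕ) :
    playAdvantage q ρ0 ρ1 β lam (cycleValue q ρ0 ρ1 β lam K) π =
      (1 - β) * (whittleFormula q ρ0 ρ1 β π K - lam) / (1 - β ^ (K + 1)) := by
  have hβK : β ^ (K + 1) < 1 := pow_lt_one₀ hβ0 hβ1 K.succ_ne_zero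
  have h1 : (1 : ℝ) - β ≠ 0 := by linarith
  have h2 : (1 : ℝ) - β ^ (K + 1) ≠ 0 := by linarith
  have h3 : β - 1 ≠ 0 := by linarith
  rw [playAdvantage, cycleValue, whittleFormula, geom_sum_eq hβ1.ne]
  unfold expectedReward
  field_simp
  ring

theorem thresholdValue_of_le {v : ℝ} {K j : ℕ} (h : K ≤ j) :
    thresholdValue q ρ0 ρ1 β lam v K j = expectedReward ρ0 ρ1 (q ^ j) + β * v := by
  simp [thresholdValue, Nat.sub_eq_zero_of_le h, max_eq_left h]

theorem thresholdValue_of_lt {v : ℝ} {K j : ℕ} (h : j < K) :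
    thresholdValue q ρ0 ρ1 β lam v K j =
      lam + β * thresholdValue q ρ0 ρ1 β lam v K (j + 1) := by
  rw [thresholdValue, thresholdValue, max_eq_right h.le, max_eq_right h,
    show K - j = K - (j + 1) + 1 by omega, geom_sum_succ, pow_succ]
  ring

theorem thresholdValue_zero_cycleValue (hβ0 : 0 ≤ β) (hβ1 : β < 1) (K : ℕ) :
    thresholdValue q ρ0 ρ1 β lam (cycleValue q ρ0 ρ1 β lam K) K 0 =
      cycleValue q ρ0 ρ1 β lam K := by
  have hβK : (1 : ℝ) - β ^ (K + 1) ≠ 0 :=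
    (sub_pos.2 (pow_lt_one₀ hβ0 hβ1 K.succ_ne_zero)).ne'
  rw [thresholdValue, Nat.sub_zero, max_eq_right (Nat.zero_le K), cycleValue]
  field_simp
  ring

theorem thresholdValue_wait_le {v : ℝ} {K : ℕ}
    (hadv : ∀ j, K ≤ j → 0 ≤ playAdvantage q ρ0 ρ1 β lam v (q ^ j)) (j : ℕ) :
    lam + β * thresholdValue q ρ0 ρ1 β lam v K (j + 1) ≤
      thresholdValue q ρ0 ρ1 β lam v K j := by
  rcases lt_or_ge j K with hj | hj
  · exact (thresholdValue_of_lt hj).ge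
  · have := hadv j hj
    rw [thresholdValue_of_le hj, thresholdValue_of_le (hj.trans j.le_succ), pow_succ']
    rw [playAdvantage] at this
    linarith

theorem play_le_thresholdValue (hβ0 : 0 ≤ β) {v : ℝ} {K : ℕ}
    (hadv : ∀ j < K, playAdvantage q ρ0 ρ1 β lam v (q ^ j) ≤ 0) (j : ℕ) :
    expectedReward ρ0 ρ1 (q ^ j) + β * v ≤ thresholdValue q ρ0 ρ1 β lam v K j := by
  rcases lt_or_ge j K with hj | hj
  · refine Nat.decreasingInduction (fun k hk ih => ?_) (thresholdValue_of_le le_rfl).ge hj.le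
    have := hadv k hk
    rw [thresholdValue_of_lt hk]
    rw [playAdvantage, ← pow_succ'] at this
    nlinarith [mul_le_mul_of_nonneg_left ih hβ0]
  · exact (thresholdValue_of_le hj).ge

namespace IsBellmanFixedPoint

theorem le_of_supersolution (hU : IsBellmanFixedPoint q ρ0 ρ1 β lam U)
    (hUbdd : BddAbove (U '' Icc 0 1)) (hβ0 : 0 ≤ β) (hβ1 : β < 1) (hq0 : 0 ≤ q)
    (hq1 : q ≤ 1) {E : ℕ → ℝ} (hwait : ∀ j, lam + β * E (j + 1) ≤ E j)
    (hplay : ∀ j, expectedReward ρ0 ρ1 (q ^ j) + β * E 0 ≤ E j) : U 1 ≤ E 0 := by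
  have hmem (j : ℕ) : q ^ j ∈ Icc (0 : ℝ) 1 := by
    simpa using pow_mul_mem_Icc hq0 hq1 (right_mem_Icc.2 zero_le_one) j
  obtain ⟨C, hC⟩ := hUbdd
  have hbdd : BddAbove (range fun j => U (q ^ j) - E j) := by
    refine ⟨C - (min ρ0 ρ1 + β * E 0), ?_⟩
    rintro _ ⟨j, rfl⟩
    linarith [hC (mem_image_of_mem U (hmem j)),
      min_le_expectedReward (ρ0 := ρ0) (ρ1 := ρ1) (hmem j), hplay j]
  have hstep (s : ℝ) (hs : ∀ j, U (q ^ j) - E j ≤ s) (j : ℕ) :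
      U (q ^ j) - E j ≤ 0 + β * max s 0 := by
    have hs' : β * s ≤ β * max s 0 := mul_le_mul_of_nonneg_left (le_max_left s 0) hβ0
    have hnext := mul_le_mul_of_nonneg_left (hs (j + 1)) hβ0
    have hfirst := mul_le_mul_of_nonneg_left (hs 0) hβ0
    rw [pow_zero] at hfirst
    rw [hU _ (hmem j), ← pow_succ', sub_le_iff_le_add, max_le_iff]
    constructor <;> linarith [hwait j, hplay j]
  simpa using le_of_forall_le_imp_le_add_mul_max hβ1 le_rfl hbdd hstep 0

theorem wait_lt_play (hU : IsBellmanFixedPoint q ρ0 ρ1 β lam U)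
    (hUbdd : BddAbove (U '' Icc 0 1)) (hβ0 : 0 ≤ β) (hβ1 : β < 1) (hq0 : 0 ≤ q)
    (hq1 : q ≤ 1) {x δ : ℝ} (hx : x ∈ Icc (0 : ℝ) 1) (hδ : 0 < δ)
    (hadv : ∀ j : ℕ, δ ≤ playAdvantage q ρ0 ρ1 β lam (U 1) (q ^ j * x)) :
    lam + β * U (q * x) < expectedReward ρ0 ρ1 x + β * U 1 := by
  set f : ℕ → ℝ := fun j =>
    lam + β * U (q ^ (j + 1) * x) - (expectedReward ρ0 ρ1 (q ^ j * x) + β * U 1) with hf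
  have hmem := pow_mul_mem_Icc hq0 hq1 hx
  have hq_mul (j : ℕ) : q * (q ^ j * x) = q ^ (j + 1) * x := by ring
  obtain ⟨C, hC⟩ := hUbdd
  have hbdd : BddAbove (range f) := by
    refine ⟨lam + β * C - (min ρ0 ρ1 + β * U 1), ?_⟩
    rintro _ ⟨j, rfl⟩
    linarith [mul_le_mul_of_nonneg_left (hC (mem_image_of_mem U (hmem (j + 1)))) hβ0,
      min_le_expectedReward (ρ0 := ρ0) (ρ1 := ρ1) (hmem j)]
  -- `f j` is minus the advantage at `q ^ j * x` plus `β` times the option value of waiting at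
  -- the next belief, and that option value is `max (f (j + 1)) 0`.
  have hstep (s : ℝ) (hs : ∀ j, f j ≤ s) (j : ℕ) : f j ≤ -δ + β * max s 0 := by
    have hoption : U (q ^ (j + 1) * x) - (expectedReward ρ0 ρ1 (q ^ (j + 1) * x) + β * U 1) =
        max (f (j + 1)) 0 := by
      rw [hU _ (hmem (j + 1)), ← max_sub_sub_right, sub_self, hq_mul]
    have hfj :
        f j = -playAdvantage q ρ0 ρ1 β lam (U 1) (q ^ j * x) + β * max (f (j + 1)) 0 := by
      rw [← hoption, playAdvantage, hq_mul, hf]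
      ring
    rw [hfj]
    linarith [hadv j, mul_le_mul_of_nonneg_left (max_le_max_right 0 (hs (j + 1))) hβ0]
  have := le_of_forall_le_imp_le_add_mul_max hβ1 (neg_nonpos.2 hδ.le) hbdd hstep 0
  simp only [hf, pow_zero, one_mul, zero_add, pow_one] at this
  linarith

end IsBellmanFixedPoint

theorem pow_lt_of_sInf_le (hq0 : 0 ≤ q) (hq1 : q < 1) (hπ : 0 < π) {K j : ℕ}
    (hK : K = sInf {k : ℕ | q ^ k < π}) (hj : K ≤ j) : q ^ j < π := by
  have hne : {k : ℕ | q ^ k < π}.Nonempty := exists_pow_lt_of_lt_one hπ hq1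
  exact (pow_le_pow_of_le_one hq0 hq1.le hj).trans_lt (hK ▸ Nat.sInf_mem hne)

theorem le_pow_of_lt_sInf {K j : ℕ} (hK : K = sInf {k : ℕ | q ^ k < π}) (hj : j < K) :
    π ≤ q ^ j :=
  not_lt.1 (Nat.notMem_of_lt_sInf (hK ▸ hj))

theorem IsBellmanFixedPoint.play_le_wait_whittleFormula {K : ℕ}
    (hU : IsBellmanFixedPoint q ρ0 ρ1 β (whittleFormula q ρ0 ρ1 β π K) U)
    (hUbdd : BddAbove (U '' Icc 0 1)) (hq0 : 0 ≤ q) (hq1 : q < 1) (hρ : ρ0 ≤ ρ1)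
    (hβ0 : 0 ≤ β) (hβ1 : β < 1) (hπ : π ∈ Ioc 0 1)
    (hK : K = sInf {k : ℕ | q ^ k < π}) :
    expectedReward ρ0 ρ1 π + β * U 1 ≤
      whittleFormula q ρ0 ρ1 β π K + β * U (q * π) := by
  set W := whittleFormula q ρ0 ρ1 β π K
  set v := cycleValue q ρ0 ρ1 β W K
  have hβq : β * q ≤ 1 := by nlinarith
  have hadv_mono {x y : ℝ} (hxy : x ≤ y) :=
    playAdvantage_le_playAdvantage (lam := W) (v := v) hρ hβ0 hβ1.le hβq hxy le_rfl
  have hadv0 : playAdvantage q ρ0 ρ1 β W v π = 0 := by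
    rw [playAdvantage_cycleValue hβ0 hβ1, sub_self, mul_zero, zero_div]
  have hv0 : thresholdValue q ρ0 ρ1 β W v K 0 = v := thresholdValue_zero_cycleValue hβ0 hβ1 K
  -- The `K`-cycle is optimal at subsidy `W`: it is a supersolution of the Bellman equation.
  have hle : U 1 ≤ v := by
    refine (hU.le_of_supersolution hUbdd hβ0 hβ1 hq0 hq1.le
      (thresholdValue_wait_le fun j hj => ?_) fun j => ?_).trans_eq hv0
    · exact hadv0.ge.trans (hadv_mono (pow_lt_of_sInf_le hq0 hq1 hπ.1 hK hj).le)
    · rw [hv0]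
      exact play_le_thresholdValue hβ0
        (fun j hj => (hadv_mono (le_pow_of_lt_sInf hK hj)).trans hadv0.le) j
  have hadv := playAdvantage_le_playAdvantage (lam := W) hρ hβ0 hβ1.le hβq (le_refl π) hle
  have hplay := hU.play_le (unitInterval.mul_mem ⟨hq0, hq1.le⟩ (Ioc_subset_Icc_self hπ))
  rw [hadv0, playAdvantage] at hadv
  linarith [mul_le_mul_of_nonneg_left hplay hβ0]

theorem IsBellmanFixedPoint.whittleFormula_le_of_play_le_wait
    (hU : IsBellmanFixedPoint q ρ0 ρ1 β lam U) (hUbdd : BddAbove (U '' Icc 0 1))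
    (hq0 : 0 ≤ q) (hq1 : q < 1) (hρ : ρ0 ≤ ρ1) (hβ0 : 0 ≤ β) (hβ1 : β < 1)
    (hπ : π ∈ Ioc 0 1) (K : ℕ)
    (hlam : expectedReward ρ0 ρ1 π + β * U 1 ≤ lam + β * U (q * π)) :
    whittleFormula q ρ0 ρ1 β π K ≤ lam := by
  by_contra! hlt
  have hδ : 0 < playAdvantage q ρ0 ρ1 β lam (cycleValue q ρ0 ρ1 β lam K) π := by
    rw [playAdvantage_cycleValue hβ0 hβ1]
    exact div_pos (mul_pos (by linarith) (by linarith))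
      (sub_pos.2 (pow_lt_one₀ hβ0 hβ1 K.succ_ne_zero))
  refine (not_le.2 ?_) hlam
  exact hU.wait_lt_play hUbdd hβ0 hβ1 hq0 hq1.le (Ioc_subset_Icc_self hπ) hδ fun j =>
    playAdvantage_le_playAdvantage hρ hβ0 hβ1.le (by nlinarith)
      (mul_le_of_le_one_left hπ.1.le (pow_le_one₀ hq0 hq1.le))
      (hU.cycleValue_le hβ0 hβ1 hq0 hq1.le K)

theorem isLeast_whittleFormula {V : ℝ → ℝ → ℝ}
    (hV : ∀ lam, IsBellmanFixedPoint q ρ0 ρ1 β lam (V · lam))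
    (hVbdd : ∀ lam, BddAbove ((V · lam) '' Icc 0 1)) (hq0 : 0 ≤ q) (hq1 : q < 1)
    (hρ : ρ0 ≤ ρ1) (hβ0 : 0 ≤ β) (hβ1 : β < 1) (hπ : π ∈ Ioc 0 1) {K : ℕ}
    (hK : K = sInf {k : ℕ | q ^ k < π}) :
    IsLeast {lam | expectedReward ρ0 ρ1 π + β * V 1 lam ≤ lam + β * V (q * π) lam}
      (whittleFormula q ρ0 ρ1 β π K) :=
  ⟨(hV _).play_le_wait_whittleFormula (hVbdd _) hq0 hq1 hρ hβ0 hβ1 hπ hK,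
    fun lam hlam =>
      (hV lam).whittleFormula_le_of_play_le_wait (hVbdd lam) hq0 hq1 hρ hβ0 hβ1 hπ K hlam⟩

theorem stmt_19_general (p ρ0 ρ1 β : ℝ)
    (hp0 : 0 < p) (hp1 : p < 1) (hr01 : ρ0 < ρ1)
    (hb0 : 0 < β) (hb1 : β < 1)
    (V : ℝ → ℝ → ℝ)
    (hVbd : ∀ lam : ℝ, ∃ C : ℝ, ∀ π ∈ Set.Icc (0:ℝ) 1, |V π lam| ≤ C)
    (hVeq : ∀ lam : ℝ, ∀ π ∈ Set.Icc (0:ℝ) 1,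
      V π lam = max (lam + β * V ((1 - p) * π) lam)
        (π * ρ0 + (1 - π) * ρ1 + β * V 1 lam)) :
    ∀ π ∈ Set.Ioc (0:ℝ) 1, ∀ K : ℕ, K = sInf {k : ℕ | (1 - p) ^ k < π} →
      sInf {lam : ℝ |
          π * ρ0 + (1 - π) * ρ1 + β * V 1 lam ≤ lam + β * V ((1 - p) * π) lam} =
        ρ1 + β ^ (K + 1) * (ρ0 - ρ1) * (1 - p) ^ K +
          ((ρ0 - ρ1) / (1 - β)) * (1 - β ^ (K + 1)) * (1 - β * (1 - p)) * π := by
  intro π hπ K hK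
  have hVbdd (lam : ℝ) : BddAbove ((V · lam) '' Icc 0 1) := by
    obtain ⟨C, hC⟩ := hVbd lam
    exact ⟨C, by rintro _ ⟨x, hx, rfl⟩; exact (abs_le.1 (hC x hx)).2⟩
  exact (isLeast_whittleFormula hVeq hVbdd (by linarith) (by linarith) hr01.le hb0.le hb1 hπ
    hK).csInf_eq

theorem stmt_19 (p ρ0 ρ1 β : ℝ)
    (hp0 : 0 < p) (hp1 : p < 1) (hr0 : 0 < ρ0) (hr01 : ρ0 < ρ1) (hr1 : ρ1 < 1)
    (hb0 : 0 < β) (hb1 : β < 1)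
    (V : ℝ → ℝ → ℝ)
    (hVbd : ∀ lam : ℝ, ∃ C : ℝ, ∀ π ∈ Set.Icc (0:ℝ) 1, |V π lam| ≤ C)
    (hVeq : ∀ lam : ℝ, ∀ π ∈ Set.Icc (0:ℝ) 1,
      V π lam = max (lam + β * V ((1 - p) * π) lam)
        (π * ρ0 + (1 - π) * ρ1 + β * V 1 lam)) :
    ∀ π ∈ Set.Ioc (0:ℝ) 1, ∀ K : ℕ, K = sInf {k : ℕ | (1 - p) ^ k < π} →
      sInf {lam : ℝ |
          π * ρ0 + (1 - π) * ρ1 + β * V 1 lam ≤ lam + β * V ((1 - p) * π) lam} =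
        ρ1 + β ^ (K + 1) * (ρ0 - ρ1) * (1 - p) ^ K +
          ((ρ0 - ρ1) / (1 - β)) * (1 - β ^ (K + 1)) * (1 - β * (1 - p)) * π :=
  stmt_19_general p ρ0 ρ1 β hp0 hp1 hr01 hb0 hb1 V hVbd hVeq
end
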